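/- arXiv:2002.03548 — 11 statements merged into one kernel-verified Lean document; each statement's English description precedes it below -/
import Mathlib

section
/- Let m ≥ 1 and let S = (s_{ij}) be an m×m real matrix that is skew-symmetric (s_{ji} = −s_{ij} for all i, j) and satisfies s_{ij} ≥ 0 whenever i < j. Then ∑_{i=1}^m ∑_{j=i+1}^m s_{ij} ≤ 2^{m−1} · ∑_{i=1}^m |∑_{j=1}^m s_{ij}|. -/
/-!
Weight row `i` by `f i`. Pairing the entries `(i, j)` and `(j, i)` by skew-symmetry gives
`∑ᵢ f i * (row sum i) = ∑_{i<j} s i j * (f i - f j)`. With `f i = (m - 1) / 2 - i` every weight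
`f i - f j = j - i` with `i < j` is at least `1`, while `|f i| ≤ (m - 1) / 2`; as the entries above
the diagonal are nonnegative, their sum is at most `(m - 1) / 2 ≤ 2 ^ (m - 1)` times the `ℓ¹`-norm
of the row sums.
-/

open Finset

theorem sum_mul_rowSum_eq_sum_Ioi {ι : Type*} [Fintype ι] [LinearOrder ι]
    [LocallyFiniteOrderTop ι] {s : ι → ι → ℝ} (hskew : ∀ i j, s j i = -s i j) (f : ι → ℝ) :
    ∑ i, f i * ∑ j, s i j = ∑ i, ∑ j ∈ Ioi i, s i j * (f i - f j) := by
  have hdiag : ∀ i, s i i = 0 := fun i => by linarith [hskew i i]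
  have hsplit : ∀ i j, f i * s i j =
      (if i < j then s i j * f i else 0) + (if j < i then s i j * f i else 0) := by
    intro i j
    rcases lt_trichotomy i j with h | rfl | h
    · simp [h, h.not_gt, mul_comm]
    · simp [hdiag]
    · simp [h, h.not_gt, mul_comm]
  have hlower : ∑ i, ∑ j, (if j < i then s i j * f i else 0) =
      ∑ i, ∑ j, if i < j then -(s i j * f j) else 0 := by
    rw [sum_comm]
    refine sum_congr rfl fun i _ => sum_congr rfl fun j _ => ?_
    rw [hskew i j, neg_mul]
  calc ∑ i, f i * ∑ j, s i j
      = ∑ i, ∑ j, (if i < j then s i j * f i else 0) +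
          ∑ i, ∑ j, (if j < i then s i j * f i else 0) := by
        simp only [mul_sum, hsplit, sum_add_distrib]
    _ = ∑ i, ∑ j, if i < j then s i j * (f i - f j) else 0 := by
        rw [hlower, ← sum_add_distrib]
        refine sum_congr rfl fun i _ => ?_
        rw [← sum_add_distrib]
        refine sum_congr rfl fun j _ => ?_
        split_ifs <;> ring
    _ = ∑ i, ∑ j ∈ Ioi i, s i j * (f i - f j) := by
        simp only [← sum_filter, filter_lt_eq_Ioi]

theorem sum_Ioi_le_mul_sum_abs_rowSum {m : ℕ} {s : Fin m → Fin m → ℝ}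
    (hskew : ∀ i j, s j i = -s i j) (hnn : ∀ i j, i < j → 0 ≤ s i j) :
    ∑ i, ∑ j ∈ Ioi i, s i j ≤ ((m : ℝ) - 1) / 2 * ∑ i, |∑ j, s i j| := by
  set c : ℝ := ((m : ℝ) - 1) / 2
  set f : Fin m → ℝ := fun i => c - (i : ℕ)
  calc ∑ i, ∑ j ∈ Ioi i, s i j
      ≤ ∑ i, ∑ j ∈ Ioi i, s i j * (f i - f j) := by
        gcongr with i _ j hj
        have hij : ((i : ℕ) : ℝ) + 1 ≤ (j : ℕ) := by exact_mod_cast mem_Ioi.mp hj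
        refine le_mul_of_one_le_right (hnn i j (mem_Ioi.mp hj)) ?_
        simp only [f]
        linarith
    _ = ∑ i, f i * ∑ j, s i j := (sum_mul_rowSum_eq_sum_Ioi hskew f).symm
    _ ≤ ∑ i, |f i| * |∑ j, s i j| := by
        refine sum_le_sum fun i _ => ?_
        rw [← abs_mul]
        exact le_abs_self _
    _ ≤ ∑ i, c * |∑ j, s i j| := by
        refine sum_le_sum fun i _ => ?_
        have hi : ((i : ℕ) : ℝ) + 1 ≤ m := by exact_mod_cast i.isLt
        gcongr
        rw [abs_le]
        constructor <;> simp only [f, c] <;> linarith [Nat.cast_nonneg (α := ℝ) (i : ℕ)]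
    _ = c * ∑ i, |∑ j, s i j| := (mul_sum _ _ _).symm

theorem half_sub_one_le_two_pow (m : ℕ) : ((m : ℝ) - 1) / 2 ≤ 2 ^ (m - 1) := by
  have hpow : ((m - 1 : ℕ) : ℝ) < 2 ^ (m - 1) := by exact_mod_cast Nat.lt_two_pow_self
  have hcast : (m : ℝ) - 1 ≤ ((m - 1 : ℕ) : ℝ) := by
    rw [sub_le_iff_le_add]
    exact_mod_cast (by omega : m ≤ m - 1 + 1)
  linarith

theorem stmt_0_general (m : ℕ) (s : Fin m → Fin m → ℝ)
    (hskew : ∀ i j : Fin m, s j i = - s i j)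
    (hnn : ∀ i j : Fin m, i < j → 0 ≤ s i j) :
    ∑ i : Fin m, ∑ j ∈ Finset.Ioi i, s i j ≤
      (2 : ℝ) ^ (m - 1) * ∑ i : Fin m, |∑ j : Fin m, s i j| :=
  (sum_Ioi_le_mul_sum_abs_rowSum hskew hnn).trans <| by
    gcongr
    exact half_sub_one_le_two_pow m

/-- Lemma 8.5: for a skew-symmetric real `m × m` matrix `s` with nonnegative
entries above the diagonal, the sum of the entries above the diagonal is bounded
by `2^(m-1)` times the `ℓ¹`-norm of the row sums. -/
theorem stmt_0 (m : ℕ) (hm : 1 ≤ m) (s : Fin m → Fin m → ℝ)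
    (hskew : ∀ i j : Fin m, s j i = - s i j)
    (hnn : ∀ i j : Fin m, i < j → 0 ≤ s i j) :
    ∑ i : Fin m, ∑ j ∈ Finset.Ioi i, s i j ≤
      (2 : ℝ) ^ (m - 1) * ∑ i : Fin m, |∑ j : Fin m, s i j| :=
  stmt_0_general m s hskew hnn
end

section
/- Let m ≥ 1 and let S = (s_{ij}) be an m×m real matrix that is skew-symmetric (s_{ji} = −s_{ij} for all i, j) and satisfies s_{ij} ≥ 0 whenever i < j. Then for every k with 1 ≤ k ≤ m one has ∑_{i=1}^k ∑_{j=i+1}^m s_{ij} ≤ 2^{k−1} · ∑_{i=1}^k |∑_{j=1}^m s_{ij}|. -/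
/-!
Write `U i = ∑_{j > i} s i j` and `r i = ∑_j s i j`. Skew-symmetry gives
`U t = r t + ∑_{i < t} s i t`, and each `s i t` with `i < t` is one of the nonnegative terms of
`U i`, so `U t ≤ |r t| + ∑_{i < t} U i`. Adding row `t` to the first `t` rows therefore at
most doubles the running bound, which gives the factor `2 ^ (k - 1)`.
-/

open Finset

section SkewSymmetric

variable {ι : Type*} [LinearOrder ι] [LocallyFiniteOrderTop ι] [LocallyFiniteOrderBot ι]
  {s : ι → ι → ℝ}

lemma sum_Iio_le_sum_sum_Ioi (hnn : ∀ i j, i < j → 0 ≤ s i j) (t : ι) :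
    ∑ i ∈ Iio t, s i t ≤ ∑ i ∈ Iio t, ∑ j ∈ Ioi i, s i j :=
  sum_le_sum fun i hi =>
    single_le_sum (fun j hj => hnn i j (mem_Ioi.1 hj)) (mem_Ioi.2 (mem_Iio.1 hi))

variable [Fintype ι]

lemma sum_Ioi_eq_sum_add_sum_Iio (hskew : ∀ i j, s j i = -s i j) (t : ι) :
    ∑ j ∈ Ioi t, s t j = ∑ j, s t j + ∑ i ∈ Iio t, s i t := by
  classical
  have hdiag : s t t = 0 := by linarith [hskew t t]
  rw [Fintype.sum_eq_add_sum_compl t, ← Ioi_disjUnion_Iio, sum_disjUnion, hdiag]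
  simp only [hskew t, sum_neg_distrib]
  ring

lemma sum_Ioi_le_abs_sum_add_sum_Iio (hskew : ∀ i j, s j i = -s i j)
    (hnn : ∀ i j, i < j → 0 ≤ s i j) (t : ι) :
    ∑ j ∈ Ioi t, s t j ≤ |∑ j, s t j| + ∑ i ∈ Iio t, ∑ j ∈ Ioi i, s i j := by
  rw [sum_Ioi_eq_sum_add_sum_Iio hskew]
  exact add_le_add (le_abs_self _) (sum_Iio_le_sum_sum_Ioi hnn t)

end SkewSymmetric

lemma Fin.filter_val_lt_eq_Iio {m k : ℕ} (hk : k < m) :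
    univ.filter (fun i : Fin m => (i : ℕ) < k) = Iio ⟨k, hk⟩ := by
  ext i
  simp [Fin.lt_def]

lemma Fin.filter_val_lt_succ {m k : ℕ} (hk : k < m) :
    univ.filter (fun i : Fin m => (i : ℕ) < k + 1) =
      insert ⟨k, hk⟩ (univ.filter (fun i : Fin m => (i : ℕ) < k)) := by
  ext i
  simp only [mem_filter, mem_univ, true_and, mem_insert, Fin.ext_iff]
  omega

theorem two_mul_sum_sum_Ioi_le {m : ℕ} {s : Fin m → Fin m → ℝ}
    (hskew : ∀ i j, s j i = -s i j) (hnn : ∀ i j, i < j → 0 ≤ s i j) {k : ℕ} (hkm : k ≤ m) :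
    2 * ∑ i ∈ univ.filter (fun i : Fin m => (i : ℕ) < k), ∑ j ∈ Ioi i, s i j ≤
      2 ^ k * ∑ i ∈ univ.filter (fun i : Fin m => (i : ℕ) < k), |∑ j, s i j| := by
  induction k with
  | zero => simp
  | succ k ih =>
    have hk : k < m := hkm
    have hrow := sum_Ioi_le_abs_sum_add_sum_Iio hskew hnn ⟨k, hk⟩
    rw [← Fin.filter_val_lt_eq_Iio hk] at hrow
    have hprev := ih hk.le
    have hpow : (1 : ℝ) ≤ 2 ^ k := one_le_pow₀ one_le_two
    rw [Fin.filter_val_lt_succ hk, sum_insert (by simp), sum_insert (by simp), pow_succ]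
    nlinarith [mul_le_mul_of_nonneg_right hpow (abs_nonneg (∑ j, s ⟨k, hk⟩ j))]

theorem stmt_1_general (m : ℕ) (s : Fin m → Fin m → ℝ)
    (hskew : ∀ i j : Fin m, s j i = - s i j)
    (hnn : ∀ i j : Fin m, i < j → 0 ≤ s i j)
    (k : ℕ) (hkm : k ≤ m) :
    ∑ i ∈ Finset.univ.filter (fun i : Fin m => (i : ℕ) < k),
        ∑ j ∈ Finset.Ioi i, s i j ≤
      (2 : ℝ) ^ (k - 1) *
        ∑ i ∈ Finset.univ.filter (fun i : Fin m => (i : ℕ) < k),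
          |∑ j : Fin m, s i j| := by
  have hbound := two_mul_sum_sum_Ioi_le hskew hnn hkm
  have hB : 0 ≤ ∑ i ∈ univ.filter (fun i : Fin m => (i : ℕ) < k), |∑ j, s i j| :=
    sum_nonneg fun _ _ => abs_nonneg _
  have hpow : (2 : ℝ) ^ k ≤ 2 * 2 ^ (k - 1) := by
    cases k with
    | zero => norm_num
    | succ k => rw [Nat.add_sub_cancel, pow_succ, mul_comm]
  nlinarith

/-- The inductive intermediate claim in the proof of Lemma 8.5: for a
skew-symmetric real `m × m` matrix `s` with nonnegative entries above the
diagonal and any `1 ≤ k ≤ m`,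
`∑_{i=1}^k ∑_{j=i+1}^m s i j ≤ 2^(k-1) ∑_{i=1}^k |∑_{j=1}^m s i j|`. -/
theorem stmt_1 (m : ℕ) (hm : 1 ≤ m) (s : Fin m → Fin m → ℝ)
    (hskew : ∀ i j : Fin m, s j i = - s i j)
    (hnn : ∀ i j : Fin m, i < j → 0 ≤ s i j)
    (k : ℕ) (hk1 : 1 ≤ k) (hkm : k ≤ m) :
    ∑ i ∈ Finset.univ.filter (fun i : Fin m => (i : ℕ) < k),
        ∑ j ∈ Finset.Ioi i, s i j ≤
      (2 : ℝ) ^ (k - 1) *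
        ∑ i ∈ Finset.univ.filter (fun i : Fin m => (i : ℕ) < k),
          |∑ j : Fin m, s i j| :=
  stmt_1_general m s hskew hnn k hkm
end

section
/- For every m ≥ 1 there exists a constant C ≥ 0, depending only on m, with the following property: for all positive real numbers u_1, …, u_m and all nonnegative real numbers x_{ij} (1 ≤ i, j ≤ m) satisfying ∑_{j=1}^m (u_j · x_{ij} − u_i · x_{ji}) = 0 for every i ∈ {1, …, m}, one has ∑_{i=1}^m ∑_{j=1}^m (u_i − u_j) · x_{ij} ≤ C · ∑_{i=1}^m |∑_{j=1}^m (u_i · x_{ij} − u_j · x_{ji})|. -/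
/-!
Put `F i j = (u i - u j) * (x i j + x j i)`, which is antisymmetric. Subtracting the
hypothesis from the `i`-th term `B i` of the right-hand side gives `B i = ∑ j, F i j`, so
for every superlevel set `S = {i | u k ≤ u i}` of `u` the antisymmetric part inside `S`
cancels and `∑ i ∈ S, ∑ j ∉ S, F i j = ∑ i ∈ S, B i ≤ ∑ i, |B i|`.
Each pair with `u j < u i` is separated by the superlevel set of `k = i`, and all separated
terms are nonnegative, so summing over the `m` levels `k` bounds the left-hand side by
`m * ∑ i, |B i|`.
-/

namespace Finset

variable {ι M : Type*} [AddCommGroup M] [IsAddTorsionFree M] {F : ι → ι → M}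

theorem sum_sum_eq_zero_of_antisymm (s : Finset ι) (hF : ∀ i j, F j i = -F i j) :
    ∑ i ∈ s, ∑ j ∈ s, F i j = 0 := by
  refine self_eq_neg.mp ?_
  conv_lhs => rw [sum_comm]
  simp only [← sum_neg_distrib]
  exact sum_congr rfl fun j _ => sum_congr rfl fun i _ => hF j i

theorem sum_sum_compl_eq_sum_sum_of_antisymm [Fintype ι] [DecidableEq ι] (s : Finset ι)
    (hF : ∀ i j, F j i = -F i j) :
    ∑ i ∈ s, ∑ j ∈ sᶜ, F i j = ∑ i ∈ s, ∑ j, F i j := by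
  simp only [← sum_add_sum_compl s, sum_add_distrib, sum_sum_eq_zero_of_antisymm s hF, zero_add]

end Finset

open Finset

section Superlevel

variable {ι : Type*} [Fintype ι] [DecidableEq ι] (u : ι → ℝ) (x : ι → ι → ℝ)

theorem sub_mul_le_sum_superlevel (hx : ∀ i j, 0 ≤ x i j) (i j : ι) :
    (u i - u j) * x i j ≤
      ∑ k, if i ∈ univ.filter (u k ≤ u ·) ∧ j ∉ univ.filter (u k ≤ u ·) then
        (u i - u j) * (x i j + x j i) else 0 := by
  by_cases hji : u j < u i
  · have hterm : ∀ k,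
        0 ≤ if i ∈ univ.filter (u k ≤ u ·) ∧ j ∉ univ.filter (u k ≤ u ·) then
          (u i - u j) * (x i j + x j i) else 0 := fun k => by
      split_ifs
      · exact mul_nonneg (by linarith) (add_nonneg (hx i j) (hx j i))
      · rfl
    refine le_trans ?_ (single_le_sum (fun k _ => hterm k) (mem_univ i))
    simpa [hji] using mul_le_mul_of_nonneg_left (le_add_of_nonneg_right (a := x i j) (hx j i))
      (sub_nonneg.mpr hji.le)
  · rw [not_lt] at hji
    rw [sum_eq_zero fun k _ => if_neg ?_]
    · exact mul_nonpos_of_nonpos_of_nonneg (by linarith) (hx i j)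
    · simp only [mem_filter, mem_univ, true_and, not_le]
      intro ⟨hki, hjk⟩
      linarith

theorem sum_sub_mul_le_card_mul_sum_abs (hx : ∀ i j, 0 ≤ x i j)
    (h : ∀ i, ∑ j, (u j * x i j - u i * x j i) = 0) :
    ∑ i, ∑ j, (u i - u j) * x i j ≤
      Fintype.card ι * ∑ i, |∑ j, (u i * x i j - u j * x j i)| := by
  set B : ι → ℝ := fun i => ∑ j, (u i * x i j - u j * x j i)
  set F : ι → ι → ℝ := fun i j => (u i - u j) * (x i j + x j i) with hF_def
  have hF : ∀ i j, F j i = -F i j := fun i j => by simp only [hF_def]; ring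
  have hFB : ∀ i, ∑ j, F i j = B i := fun i => by
    have : ∑ j, F i j = B i - ∑ j, (u j * x i j - u i * x j i) := by
      simp only [hF_def, B, ← sum_sub_distrib]; congr 1; ext j; ring
    rw [this, h i, sub_zero]
  set S : ι → Finset ι := fun k => univ.filter (u k ≤ u ·)
  have cut : ∀ k, ∑ i ∈ S k, ∑ j ∈ (S k)ᶜ, F i j ≤ ∑ i, |B i| := fun k =>
    calc ∑ i ∈ S k, ∑ j ∈ (S k)ᶜ, F i j = ∑ i ∈ S k, B i := by
          simp only [sum_sum_compl_eq_sum_sum_of_antisymm _ hF, hFB]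
      _ ≤ ∑ i ∈ S k, |B i| := sum_le_sum fun i _ => le_abs_self _
      _ ≤ ∑ i, |B i| := sum_le_sum_of_subset_of_nonneg (subset_univ _) fun i _ _ => abs_nonneg _
  calc ∑ i, ∑ j, (u i - u j) * x i j
      ≤ ∑ i, ∑ j, ∑ k, if i ∈ S k ∧ j ∉ S k then F i j else 0 :=
        sum_le_sum fun i _ => sum_le_sum fun j _ => sub_mul_le_sum_superlevel u x hx i j
    _ = ∑ i, ∑ k, ∑ j, if i ∈ S k ∧ j ∉ S k then F i j else 0 :=
        sum_congr rfl fun i _ => sum_comm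
    _ = ∑ k, ∑ i, ∑ j, if i ∈ S k ∧ j ∉ S k then F i j else 0 := sum_comm
    _ = ∑ k, ∑ i ∈ S k, ∑ j ∈ (S k)ᶜ, F i j := by
        simp only [ite_and, ← mem_compl, sum_ite_irrel, sum_const_zero, Fintype.sum_ite_mem]
    _ ≤ ∑ k : ι, ∑ i, |B i| := sum_le_sum fun k _ => cut k
    _ = Fintype.card ι * ∑ i, |B i| := by rw [sum_const, card_univ, nsmul_eq_mul]

end Superlevel

theorem stmt_2_general (m : ℕ) :
    ∃ C : ℝ, 0 ≤ C ∧
      ∀ u : Fin m → ℝ, (∀ i, 0 < u i) →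
      ∀ x : Fin m → Fin m → ℝ, (∀ i j, 0 ≤ x i j) →
      (∀ i : Fin m, ∑ j : Fin m, (u j * x i j - u i * x j i) = 0) →
      ∑ i : Fin m, ∑ j : Fin m, (u i - u j) * x i j ≤
        C * ∑ i : Fin m, |∑ j : Fin m, (u i * x i j - u j * x j i)| :=
  ⟨m, m.cast_nonneg, fun u _ x hx h => by
    simpa using sum_sub_mul_le_card_mul_sum_abs u x hx h⟩

/-- The key real-number inequality behind Lemma 8.4: there is a constant `C`
depending only on `m` such that for positive reals `u i` and nonnegative reals
`x i j` satisfying the moment-map vanishing condition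
`∑ j (u j * x i j - u i * x j i) = 0` for all `i`, one has
`∑ i ∑ j (u i - u j) * x i j ≤ C * ∑ i |∑ j (u i * x i j - u j * x j i)|`. -/
theorem stmt_2 (m : ℕ) (hm : 1 ≤ m) :
    ∃ C : ℝ, 0 ≤ C ∧
      ∀ u : Fin m → ℝ, (∀ i, 0 < u i) →
      ∀ x : Fin m → Fin m → ℝ, (∀ i j, 0 ≤ x i j) →
      (∀ i : Fin m, ∑ j : Fin m, (u j * x i j - u i * x j i) = 0) →
      ∑ i : Fin m, ∑ j : Fin m, (u i - u j) * x i j ≤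
        C * ∑ i : Fin m, |∑ j : Fin m, (u i * x i j - u j * x j i)| :=
  stmt_2_general m
end

section
/- For every m ≥ 1 there exists a constant C ≥ 0, depending only on m, such that for every normal matrix α ∈ M_m(ℂ) and every g ∈ GL_m(ℂ), writing β = g·α·g⁻¹, one has ‖β‖² − ‖α‖² ≤ C · ‖ββᴴ − βᴴβ‖, where ‖·‖ is the Frobenius norm. -/
/-!
By Schur, `β = U T Uᴴ` with `U` unitary and `T` upper triangular. Conjugation by `U` preserves
the Frobenius norm and commutes with `X ↦ X Xᴴ - Xᴴ X`, and the diagonal of `T` lists the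
eigenvalues of `β`, which are those of `α`. The `i`-th diagonal entry of `T Tᴴ - Tᴴ T` is the
squared norm of row `i` minus that of column `i`; summed over `i ≤ k` this is the mass of the
block of `T` with rows `≤ k` and columns `> k`, which dominates the part of row `k` strictly
above the diagonal. Summing over `k` gives `‖T‖² - ∑ |λᵢ|² ≤ m² ‖T Tᴴ - Tᴴ T‖`. For normal `α`
the left side is `≤ 0`, and it is always `≥ 0`, so `‖α‖² = ∑ |λᵢ|²`.
-/

open Matrix

/-- The Frobenius norm of a complex `m × m` matrix. -/
noncomputable def frobNorm {m : ℕ} (A : Matrix (Fin m) (Fin m) ℂ) : ℝ :=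
  Real.sqrt (∑ i, ∑ j, ‖A i j‖ ^ 2)

open Finset Module Polynomial Unitary
open scoped InnerProductSpace

def selfCommutator {R : Type*} [NonUnitalRing R] [Star R] (x : R) : R := x * star x - star x * x

theorem map_selfCommutator {R S F : Type*} [NonUnitalRing R] [Star R] [NonUnitalRing S] [Star S]
    [FunLike F R S] [NonUnitalRingHomClass F R S] [StarHomClass F R S] (f : F) (x : R) :
    f (selfCommutator x) = selfCommutator (f x) := by
  simp only [selfCommutator, map_sub, map_mul, map_star]

section Schur

variable {𝕜 E : Type*} [RCLike 𝕜] [NormedAddCommGroup E] [InnerProductSpace 𝕜 E]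

theorem Orthonormal.snoc {n : ℕ} {v : E} {vs : Fin n → E} (hvs : Orthonormal 𝕜 vs)
    (hv : ∀ i, ⟪vs i, v⟫_𝕜 = 0) (hv₁ : ‖v‖ = 1) :
    Orthonormal 𝕜 (Fin.snoc vs v : Fin (n + 1) → E) := by
  classical
  have hv' i : ⟪v, vs i⟫_𝕜 = 0 := inner_eq_zero_symm.mp (hv i)
  rw [orthonormal_iff_ite] at hvs ⊢
  intro i j
  induction i using Fin.lastCases <;> induction j using Fin.lastCases <;>
    simp [hvs, hv, hv', hv₁, inner_self_eq_norm_sq_to_K, (Fin.castSucc_ne_last _).symm]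

theorem LinearMap.mapsTo_orthogonal_span_singleton [FiniteDimensional 𝕜 E]
    (T : E →ₗ[𝕜] E) {v : E} {μ : 𝕜} (hv : T.adjoint v = μ • v) :
    Set.MapsTo T (𝕜 ∙ v)ᗮ (𝕜 ∙ v)ᗮ := by
  intro x hx
  rw [SetLike.mem_coe, Submodule.mem_orthogonal_singleton_iff_inner_right] at hx ⊢
  rw [← LinearMap.adjoint_inner_left, hv, inner_smul_left, hx, mul_zero]

end Schur

/-- Schur triangulation. The last basis vector is a unit eigenvector of `T†`, whose orthogonal
complement is `T`-invariant. -/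
theorem LinearMap.exists_orthonormalBasis_inner_apply_eq_zero_of_lt
    {E : Type*} [NormedAddCommGroup E] [InnerProductSpace ℂ E] [FiniteDimensional ℂ E]
    {n : ℕ} (hn : finrank ℂ E = n) (T : E →ₗ[ℂ] E) :
    ∃ b : OrthonormalBasis (Fin n) ℂ E, ∀ ⦃i j⦄, j < i → ⟪b i, T (b j)⟫_ℂ = 0 := by
  induction n generalizing E with
  | zero => exact ⟨(stdOrthonormalBasis ℂ E).reindex (finCongr hn), fun i => i.elim0⟩
  | succ n ih =>
    have : Nontrivial E := Module.nontrivial_of_finrank_eq_succ hn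
    have : Fact (finrank ℂ E = n + 1) := ⟨hn⟩
    obtain ⟨μ, hμ⟩ := Module.End.exists_eigenvalue T.adjoint
    obtain ⟨v, hv⟩ := hμ.exists_hasEigenvector
    set u : E := (‖v‖⁻¹ : ℂ) • v
    have hu₁ : ‖u‖ = 1 := norm_smul_inv_norm hv.2
    have hTu : T.adjoint u = μ • u := by rw [map_smul, hv.apply_eq_smul, smul_comm]
    have hTK := T.mapsTo_orthogonal_span_singleton hTu
    obtain ⟨b', hb'⟩ := ih (Submodule.finrank_orthogonal_span_singleton (norm_ne_zero_iff.mp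
      (hu₁.trans_ne one_ne_zero))) (T.restrict hTK)
    have hon : Orthonormal ℂ (Fin.snoc (fun i => (b' i : E)) u : Fin (n + 1) → E) :=
      (b'.orthonormal.comp_linearIsometry (ℂ ∙ u)ᗮ.subtypeₗᵢ).snoc
        (fun i => Submodule.mem_orthogonal_singleton_iff_inner_left.mp (b' i).2) hu₁
    let b := (basisOfOrthonormalOfCardEqFinrank hon (by simp [hn])).toOrthonormalBasis
      (by rwa [coe_basisOfOrthonormalOfCardEqFinrank])
    have hb : ⇑b = Fin.snoc (fun i => (b' i : E)) u := by simp [b]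
    refine ⟨b, fun i j hji => ?_⟩
    rw [hb]
    induction j using Fin.lastCases with
    | last => exact absurd hji (not_lt.mpr (Fin.le_last i))
    | cast j =>
      induction i using Fin.lastCases with
      | last =>
        simpa using Submodule.mem_orthogonal_singleton_iff_inner_right.mp (hTK (b' j).2)
      | cast i =>
        rw [Fin.snoc_castSucc, Fin.snoc_castSucc]
        exact hb' (Fin.castSucc_lt_castSucc_iff.mp hji)

theorem Matrix.star_basisToMatrix_mul_mul_apply {ι : Type*} [Fintype ι] [DecidableEq ι]
    (A : Matrix ι ι ℂ) (b : OrthonormalBasis ι ℂ (EuclideanSpace ℂ ι)) (i j : ι) :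
    (star ((EuclideanSpace.basisFun ι ℂ).toBasis.toMatrix b) * A *
        (EuclideanSpace.basisFun ι ℂ).toBasis.toMatrix b) i j =
      ⟪b i, toEuclideanLin A (b j)⟫_ℂ := by
  simp only [mul_apply, star_apply, Basis.toMatrix_apply, OrthonormalBasis.coe_toBasis_repr_apply,
    EuclideanSpace.basisFun_repr, RCLike.star_def, sum_mul, EuclideanSpace.inner_eq_star_dotProduct,
    dotProduct, ofLp_toLpLin, toLin'_apply, mulVec, Pi.star_apply]
  rw [Finset.sum_comm]
  exact Finset.sum_congr rfl fun _ _ => Finset.sum_congr rfl fun _ _ => by ring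

theorem Matrix.exists_unitary_isUpperTriangular {n : ℕ} (A : Matrix (Fin n) (Fin n) ℂ) :
    ∃ U : unitary (Matrix (Fin n) (Fin n) ℂ), (conjStarAlgAut ℂ _ U A).IsUpperTriangular := by
  obtain ⟨b, hb⟩ := (toEuclideanLin A).exists_orthonormalBasis_inner_apply_eq_zero_of_lt
    finrank_euclideanSpace_fin
  set V := (EuclideanSpace.basisFun (Fin n) ℂ).toBasis.toMatrix b
  have hV : V ∈ unitary _ :=
    (EuclideanSpace.basisFun (Fin n) ℂ).toMatrix_orthonormalBasis_mem_unitary b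
  refine ⟨star ⟨V, hV⟩, fun i j hji => ?_⟩
  rw [conjStarAlgAut_star_apply, star_basisToMatrix_mul_mul_apply]
  exact hb hji

section Frobenius

variable {m : ℕ}

theorem frobNorm_sq (A : Matrix (Fin m) (Fin m) ℂ) : frobNorm A ^ 2 = ∑ i, ∑ j, ‖A i j‖ ^ 2 :=
  Real.sq_sqrt (by positivity)

theorem frobNorm_eq_sqrt_re_trace (A : Matrix (Fin m) (Fin m) ℂ) :
    frobNorm A = √(trace (Aᴴ * A)).re := by
  rw [frobNorm, Finset.sum_comm]
  simp [trace, Matrix.mul_apply, Complex.sq_norm, Complex.normSq_apply]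

theorem norm_apply_le_frobNorm (A : Matrix (Fin m) (Fin m) ℂ) (i j : Fin m) :
    ‖A i j‖ ≤ frobNorm A := by
  refine Real.le_sqrt_of_sq_le ?_
  calc ‖A i j‖ ^ 2 ≤ ∑ j', ‖A i j'‖ ^ 2 :=
        single_le_sum (f := fun j' => ‖A i j'‖ ^ 2) (fun _ _ => by positivity) (mem_univ j)
    _ ≤ ∑ i', ∑ j', ‖A i' j'‖ ^ 2 :=
        single_le_sum (f := fun i' => ∑ j', ‖A i' j'‖ ^ 2) (fun _ _ => by positivity) (mem_univ i)

theorem frobNorm_conjStarAlgAut (U : unitary (Matrix (Fin m) (Fin m) ℂ))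
    (A : Matrix (Fin m) (Fin m) ℂ) : frobNorm (conjStarAlgAut ℂ _ U A) = frobNorm A := by
  rw [frobNorm_eq_sqrt_re_trace, frobNorm_eq_sqrt_re_trace, ← star_eq_conjTranspose, ← map_star,
    ← map_mul, conjStarAlgAut_apply, trace_mul_cycle, coe_star_mul_self, one_mul,
    star_eq_conjTranspose]

theorem sum_sq_norm_diag_le_frobNorm_sq (A : Matrix (Fin m) (Fin m) ℂ) :
    ∑ i, ‖A i i‖ ^ 2 ≤ frobNorm A ^ 2 := by
  rw [frobNorm_sq]
  exact sum_le_sum fun i _ =>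
    single_le_sum (f := fun j => ‖A i j‖ ^ 2) (fun _ _ => by positivity) (mem_univ i)

end Frobenius

section Triangular

variable {ι : Type*} [Fintype ι]

theorem re_selfCommutator_apply_self (T : Matrix ι ι ℂ) (i : ι) :
    (selfCommutator T i i).re = ∑ j, ‖T i j‖ ^ 2 - ∑ j, ‖T j i‖ ^ 2 := by
  simp [selfCommutator, Matrix.mul_apply, Complex.sq_norm, Complex.normSq_apply]

variable [LinearOrder ι] {T : Matrix ι ι ℂ}

theorem Matrix.IsUpperTriangular.sum_sq_norm_eq (hT : T.IsUpperTriangular) :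
    ∑ i, ∑ j, ‖T i j‖ ^ 2 = ∑ i, ‖T i i‖ ^ 2 + ∑ i, ∑ j ∈ univ.filter (i < ·), ‖T i j‖ ^ 2 := by
  rw [← sum_add_distrib]
  refine sum_congr rfl fun i _ => ?_
  rw [← sum_filter_add_sum_filter_not univ (· ≤ i)]
  simp only [not_le]
  congr 1
  refine sum_eq_single_of_mem i (by simp) fun j hj hji => ?_
  rw [hT (lt_of_le_of_ne (mem_filter.mp hj).2 hji), norm_zero, sq, zero_mul]

theorem Matrix.IsUpperTriangular.sum_re_selfCommutator_apply_self (hT : T.IsUpperTriangular)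
    (k : ι) :
    ∑ i ∈ univ.filter (· ≤ k), (selfCommutator T i i).re =
      ∑ i ∈ univ.filter (· ≤ k), ∑ j ∈ univ.filter (k < ·), ‖T i j‖ ^ 2 := by
  have hrow i : ∑ j, ‖T i j‖ ^ 2 =
      ∑ j ∈ univ.filter (· ≤ k), ‖T i j‖ ^ 2 + ∑ j ∈ univ.filter (k < ·), ‖T i j‖ ^ 2 := by
    rw [← sum_filter_add_sum_filter_not univ (· ≤ k)]
    simp only [not_le]
  have hcol : ∀ i ∈ univ.filter (· ≤ k),
      ∑ j, ‖T j i‖ ^ 2 = ∑ j ∈ univ.filter (· ≤ k), ‖T j i‖ ^ 2 := by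
    intro i hi
    refine (sum_filter_of_ne fun j _ hj => ?_).symm
    by_contra! hkj
    exact hj (by rw [hT ((mem_filter.mp hi).2.trans_lt hkj), norm_zero, sq, zero_mul])
  simp_rw [re_selfCommutator_apply_self, sum_sub_distrib, hrow, sum_add_distrib, sum_congr rfl hcol]
  rw [sum_comm (s := univ.filter (· ≤ k)) (t := univ.filter (· ≤ k))]
  ring

theorem Matrix.IsUpperTriangular.sum_sq_norm_lt_le (hT : T.IsUpperTriangular) (k : ι) :
    ∑ j ∈ univ.filter (k < ·), ‖T k j‖ ^ 2 ≤
      ∑ i ∈ univ.filter (· ≤ k), (selfCommutator T i i).re := by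
  rw [hT.sum_re_selfCommutator_apply_self k]
  exact single_le_sum (f := fun i => ∑ j ∈ univ.filter (k < ·), ‖T i j‖ ^ 2)
    (fun _ _ => by positivity) (by simp)

end Triangular

theorem Matrix.IsUpperTriangular.frobNorm_sq_sub_le {m : ℕ} {T : Matrix (Fin m) (Fin m) ℂ}
    (hT : T.IsUpperTriangular) :
    frobNorm T ^ 2 - ∑ i, ‖T i i‖ ^ 2 ≤ m * m * frobNorm (selfCommutator T) := by
  set P := selfCommutator T
  have hpartial k : ∑ i ∈ univ.filter (· ≤ k), (P i i).re ≤ m * frobNorm P :=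
    calc ∑ i ∈ univ.filter (· ≤ k), (P i i).re ≤ ∑ i ∈ univ.filter (· ≤ k), frobNorm P :=
          sum_le_sum fun i _ => (Complex.re_le_norm _).trans (norm_apply_le_frobNorm P i i)
      _ = (univ.filter (· ≤ k)).card * frobNorm P := by rw [sum_const, nsmul_eq_mul]
      _ ≤ m * frobNorm P := by
          gcongr
          · exact Real.sqrt_nonneg _
          · exact (card_filter_le _ _).trans_eq (card_fin m)
  calc frobNorm T ^ 2 - ∑ i, ‖T i i‖ ^ 2 = ∑ k, ∑ j ∈ univ.filter (k < ·), ‖T k j‖ ^ 2 := by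
        rw [frobNorm_sq, hT.sum_sq_norm_eq, add_sub_cancel_left]
    _ ≤ ∑ k, ∑ i ∈ univ.filter (· ≤ k), (P i i).re := sum_le_sum fun k _ => hT.sum_sq_norm_lt_le k
    _ ≤ ∑ _k : Fin m, m * frobNorm P := sum_le_sum fun k _ => hpartial k
    _ = m * m * frobNorm P := by
        rw [sum_const, card_univ, Fintype.card_fin, nsmul_eq_mul, mul_assoc]

section Eigenvalues

variable {ι : Type*} [Fintype ι] [DecidableEq ι]

noncomputable def Matrix.sumSqNormEigenvalues (A : Matrix ι ι ℂ) : ℝ :=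
  (A.charpoly.roots.map fun z => ‖z‖ ^ 2).sum

theorem Matrix.IsUpperTriangular.sumSqNormEigenvalues_eq [LinearOrder ι] {T : Matrix ι ι ℂ}
    (hT : T.IsUpperTriangular) : T.sumSqNormEigenvalues = ∑ i, ‖T i i‖ ^ 2 := by
  have hroots : (∏ i, (X - C (T i i))).roots = univ.val.map fun i => T i i := by
    simpa [Multiset.map_map, Function.comp_def] using
      roots_multiset_prod_X_sub_C (univ.val.map fun i => T i i)
  rw [sumSqNormEigenvalues, charpoly_of_isUpperTriangular T hT, hroots, Multiset.map_map,
    sum_eq_multiset_sum]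
  rfl

theorem Matrix.sumSqNormEigenvalues_units_conj (g : (Matrix ι ι ℂ)ˣ) (A : Matrix ι ι ℂ) :
    sumSqNormEigenvalues ((g : Matrix ι ι ℂ) * A * (↑g⁻¹ : Matrix ι ι ℂ)) =
      A.sumSqNormEigenvalues := by
  rw [sumSqNormEigenvalues, sumSqNormEigenvalues, coe_units_inv, charpoly_units_conj]

theorem Matrix.sumSqNormEigenvalues_conjStarAlgAut (U : unitary (Matrix ι ι ℂ))
    (A : Matrix ι ι ℂ) : (conjStarAlgAut ℂ _ U A).sumSqNormEigenvalues = A.sumSqNormEigenvalues :=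
  sumSqNormEigenvalues_units_conj (toUnits U) A

end Eigenvalues

section Henrici

variable {m : ℕ}

theorem frobNorm_sq_sub_sumSqNormEigenvalues_le (A : Matrix (Fin m) (Fin m) ℂ) :
    frobNorm A ^ 2 - A.sumSqNormEigenvalues ≤ m * m * frobNorm (selfCommutator A) := by
  obtain ⟨U, hU⟩ := A.exists_unitary_isUpperTriangular
  rw [← frobNorm_conjStarAlgAut U A, ← frobNorm_conjStarAlgAut U (selfCommutator A),
    map_selfCommutator, ← sumSqNormEigenvalues_conjStarAlgAut U A, hU.sumSqNormEigenvalues_eq]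
  exact hU.frobNorm_sq_sub_le

theorem sumSqNormEigenvalues_le_frobNorm_sq (A : Matrix (Fin m) (Fin m) ℂ) :
    A.sumSqNormEigenvalues ≤ frobNorm A ^ 2 := by
  obtain ⟨U, hU⟩ := A.exists_unitary_isUpperTriangular
  rw [← frobNorm_conjStarAlgAut U A, ← sumSqNormEigenvalues_conjStarAlgAut U A,
    hU.sumSqNormEigenvalues_eq]
  exact sum_sq_norm_diag_le_frobNorm_sq _

theorem frobNorm_sq_eq_sumSqNormEigenvalues {A : Matrix (Fin m) (Fin m) ℂ}
    (hA : A * Aᴴ = Aᴴ * A) : frobNorm A ^ 2 = A.sumSqNormEigenvalues := by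
  have hcomm : selfCommutator A = 0 := sub_eq_zero.mpr hA
  have hle := frobNorm_sq_sub_sumSqNormEigenvalues_le A
  rw [hcomm, show frobNorm (0 : Matrix (Fin m) (Fin m) ℂ) = 0 by simp [frobNorm], mul_zero] at hle
  linarith [sumSqNormEigenvalues_le_frobNorm_sq A]

end Henrici

theorem stmt_3_general (m : ℕ) :
    ∃ C : ℝ, 0 ≤ C ∧
      ∀ α : Matrix (Fin m) (Fin m) ℂ, α * αᴴ = αᴴ * α →
      ∀ g : (Matrix (Fin m) (Fin m) ℂ)ˣ,
      ∀ β : Matrix (Fin m) (Fin m) ℂ,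
        β = (g : Matrix (Fin m) (Fin m) ℂ) * α * (↑g⁻¹ : Matrix (Fin m) (Fin m) ℂ) →
        frobNorm β ^ 2 - frobNorm α ^ 2 ≤ C * frobNorm (β * βᴴ - βᴴ * β) := by
  refine ⟨m * m, by positivity, fun α hα g β hβ => ?_⟩
  rw [frobNorm_sq_eq_sumSqNormEigenvalues hα, ← sumSqNormEigenvalues_units_conj g α, ← hβ]
  exact frobNorm_sq_sub_sumSqNormEigenvalues_le β

/-- Lemma 8.4 in the adjoint model: there is a constant `C ≥ 0` depending only
on `m` such that for every normal matrix `α` and every `g ∈ GL_m(ℂ)`, with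
`β = g α g⁻¹`, one has `‖β‖² - ‖α‖² ≤ C ‖β βᴴ - βᴴ β‖` (Frobenius norm). -/
theorem stmt_3 (m : ℕ) (hm : 1 ≤ m) :
    ∃ C : ℝ, 0 ≤ C ∧
      ∀ α : Matrix (Fin m) (Fin m) ℂ, α * αᴴ = αᴴ * α →
      ∀ g : (Matrix (Fin m) (Fin m) ℂ)ˣ,
      ∀ β : Matrix (Fin m) (Fin m) ℂ,
        β = (g : Matrix (Fin m) (Fin m) ℂ) * α * (↑g⁻¹ : Matrix (Fin m) (Fin m) ℂ) →
        frobNorm β ^ 2 - frobNorm α ^ 2 ≤ C * frobNorm (β * βᴴ - βᴴ * β) :=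
  stmt_3_general m
end

section
/- A matrix α ∈ M_m(ℂ) satisfies ‖g·α·g⁻¹‖ ≥ ‖α‖ for every g ∈ GL_m(ℂ) (i.e. α has minimal Frobenius norm in its conjugation orbit) if and only if α is normal, i.e. ααᴴ = αᴴα. -/
/-!
Write `gᴴ g = U e^x Uᴴ` with `U` unitary and `x` real (spectral theorem for the positive definite
matrix `gᴴ g`). Then `‖g α g⁻¹‖² = ∑ᵢⱼ |γᵢⱼ|² e^(xᵢ - xⱼ)` with `γ = Uᴴ α U`: a convex function of
`x` whose gradient at `x = 0` is the diagonal of the moment map `μ(γ) = γ γᴴ - γᴴ γ = Uᴴ μ(α) U`.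
If `α` is normal this gradient vanishes and `e^y ≥ 1 + y` shows that `x = 0` is the minimum.
Conversely, if `α` is minimal, diagonalise the Hermitian matrix `μ(α) = U diag(λ) Uᴴ` and move
along `x = t λ`: the derivative at `t = 0` is `∑ λᵢ²`, which must vanish, so `μ(α) = 0`.
-/

open Matrix

lemma Finset.sum_sum_mul_sub {ι : Type*} [Fintype ι] (c : ι → ι → ℝ) (x : ι → ℝ) :
    ∑ i, ∑ j, c i j * (x i - x j) = ∑ i, x i * (∑ j, c i j - ∑ j, c j i) := by
  simp only [mul_sub, Finset.sum_sub_distrib, Finset.mul_sum]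
  rw [Finset.sum_comm (f := fun i j => c i j * x j)]
  simp only [mul_comm]

namespace Matrix

variable {l n 𝕜 : Type*} [RCLike 𝕜]

noncomputable def frobNormSq [Fintype l] [Fintype n] (A : Matrix l n 𝕜) : ℝ :=
  ∑ i, ∑ j, ‖A i j‖ ^ 2

lemma frobNormSq_nonneg [Fintype l] [Fintype n] (A : Matrix l n 𝕜) : 0 ≤ frobNormSq A := by
  unfold frobNormSq
  positivity

lemma mul_conjTranspose_self_apply_self [Fintype n] (A : Matrix l n 𝕜) (i : l) :
    (A * Aᴴ) i i = ((∑ j, ‖A i j‖ ^ 2 : ℝ) : 𝕜) := by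
  simp [mul_apply, RCLike.mul_conj]

lemma conjTranspose_mul_self_apply_self [Fintype l] (A : Matrix l n 𝕜) (j : n) :
    (Aᴴ * A) j j = ((∑ i, ‖A i j‖ ^ 2 : ℝ) : 𝕜) := by
  simp [mul_apply, RCLike.conj_mul]

lemma ofReal_frobNormSq [Fintype l] [Fintype n] (A : Matrix l n 𝕜) :
    (frobNormSq A : 𝕜) = trace (A * Aᴴ) := by
  simp [frobNormSq, trace, mul_conjTranspose_self_apply_self]

variable [Fintype n]

/-- `‖e^{x/2} γ e^{-x/2}‖²`: the squared norm along the orbit of `γ` under the diagonal torus. -/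
noncomputable def torusNormSq (γ : Matrix n n 𝕜) (x : n → ℝ) : ℝ :=
  ∑ i, ∑ j, ‖γ i j‖ ^ 2 * Real.exp (x i - x j)

def momentMap (α : Matrix n n 𝕜) : Matrix n n 𝕜 :=
  α * αᴴ - αᴴ * α

lemma momentMap_eq_zero_iff {α : Matrix n n 𝕜} : momentMap α = 0 ↔ α * αᴴ = αᴴ * α :=
  sub_eq_zero

lemma isHermitian_momentMap (α : Matrix n n 𝕜) : (momentMap α).IsHermitian := by
  simp [momentMap, IsHermitian, conjTranspose_sub, conjTranspose_mul]

lemma re_momentMap_apply_self (γ : Matrix n n 𝕜) (i : n) :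
    RCLike.re (momentMap γ i i) = ∑ j, ‖γ i j‖ ^ 2 - ∑ j, ‖γ j i‖ ^ 2 := by
  simp only [momentMap, sub_apply, map_sub, mul_conjTranspose_self_apply_self,
    conjTranspose_mul_self_apply_self, RCLike.ofReal_re]

lemma sum_sum_norm_sq_mul_sub (γ : Matrix n n 𝕜) (x : n → ℝ) :
    ∑ i, ∑ j, ‖γ i j‖ ^ 2 * (x i - x j) = ∑ i, x i * RCLike.re (momentMap γ i i) := by
  simp only [Finset.sum_sum_mul_sub, re_momentMap_apply_self]

lemma torusNormSq_zero (γ : Matrix n n 𝕜) : torusNormSq γ 0 = frobNormSq γ := by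
  simp [torusNormSq, frobNormSq]

lemma frobNormSq_add_le_torusNormSq (γ : Matrix n n 𝕜) (x : n → ℝ) :
    frobNormSq γ + ∑ i, x i * RCLike.re (momentMap γ i i) ≤ torusNormSq γ x := by
  rw [← sum_sum_norm_sq_mul_sub, frobNormSq, ← Finset.sum_add_distrib]
  refine Finset.sum_le_sum fun i _ => ?_
  rw [← Finset.sum_add_distrib]
  refine Finset.sum_le_sum fun j _ => ?_
  rw [← mul_one_add]
  gcongr
  linarith [Real.add_one_le_exp (x i - x j)]

lemma hasDerivAt_torusNormSq_smul (γ : Matrix n n 𝕜) (x : n → ℝ) :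
    HasDerivAt (fun t : ℝ => torusNormSq γ (t • x))
      (∑ i, x i * RCLike.re (momentMap γ i i)) 0 := by
  rw [← sum_sum_norm_sq_mul_sub]
  refine HasDerivAt.fun_sum fun i _ => HasDerivAt.fun_sum fun j _ => ?_
  have h := (((hasDerivAt_id (0 : ℝ)).mul_const (x i - x j)).exp).const_mul (‖γ i j‖ ^ 2)
  simpa [mul_sub] using h

variable [DecidableEq n]

lemma momentMap_unitary_conj (α : Matrix n n 𝕜) {U : Matrix n n 𝕜} (hU : Uᴴ * U = 1) :
    momentMap (Uᴴ * α * U) = Uᴴ * momentMap α * U := by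
  simp only [momentMap, conjTranspose_mul, conjTranspose_conjTranspose, mul_sub, sub_mul,
    mul_assoc]
  simp only [← mul_assoc U Uᴴ, mul_eq_one_comm.mp hU, one_mul]

lemma ofReal_torusNormSq (γ : Matrix n n 𝕜) (x : n → ℝ) :
    (torusNormSq γ x : 𝕜) = trace (γ * diagonal (fun j => (Real.exp (-x j) : 𝕜)) * γᴴ *
      diagonal (fun i => (Real.exp (x i) : 𝕜))) := by
  simp only [torusNormSq, trace, diag, mul_apply, diagonal_apply, mul_ite, mul_zero,
    Finset.sum_ite_eq', Finset.mem_univ, if_true, conjTranspose_apply, Finset.sum_mul]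
  push_cast
  refine Finset.sum_congr rfl fun i _ => Finset.sum_congr rfl fun j _ => ?_
  rw [← RCLike.mul_conj, sub_eq_add_neg, Real.exp_add, RCLike.star_def]
  push_cast
  ring

lemma frobNormSq_units_conj_eq_torusNormSq (g : (Matrix n n 𝕜)ˣ) (α : Matrix n n 𝕜)
    {U : Matrix n n 𝕜} (hU : Uᴴ * U = 1) (x : n → ℝ)
    (hg : (g : Matrix n n 𝕜)ᴴ * (g : Matrix n n 𝕜) =
      U * diagonal (fun i => (Real.exp (x i) : 𝕜)) * Uᴴ) :
    frobNormSq ((g : Matrix n n 𝕜) * α * (↑g⁻¹ : Matrix n n 𝕜)) =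
      torusNormSq (Uᴴ * α * U) x := by
  set G : Matrix n n 𝕜 := ↑g with hG
  set G' : Matrix n n 𝕜 := ↑g⁻¹
  set D := diagonal (fun i => (Real.exp (x i) : 𝕜))
  set D' := diagonal (fun i => (Real.exp (-x i) : 𝕜))
  have hU' : U * Uᴴ = 1 := mul_eq_one_comm.mp hU
  have hDD' : D * D' = 1 := by
    simp only [D, D', diagonal_mul_diagonal, ← RCLike.ofReal_mul, ← Real.exp_add, add_neg_cancel,
      Real.exp_zero, RCLike.ofReal_one, diagonal_one]
  have hG'G : G' * G'ᴴ * (Gᴴ * G) = 1 := by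
    calc G' * G'ᴴ * (Gᴴ * G) = G' * (G * G')ᴴ * G := by simp only [conjTranspose_mul, mul_assoc]
      _ = 1 := by simp [G, G']
  have hGG' : Gᴴ * G * (U * D' * Uᴴ) = 1 := by
    rw [hg]
    simp only [mul_assoc]
    rw [← mul_assoc Uᴴ U, hU, one_mul, ← mul_assoc D, hDD', one_mul, hU']
  have hinv : G' * G'ᴴ = U * D' * Uᴴ := left_inv_eq_right_inv hG'G hGG'
  apply RCLike.ofReal_injective (K := 𝕜)
  rw [ofReal_frobNormSq, ofReal_torusNormSq]
  calc trace (G * α * G' * (G * α * G')ᴴ)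
      = trace (G * (α * G' * G'ᴴ * αᴴ * Gᴴ)) := by simp only [conjTranspose_mul, mul_assoc]
    _ = trace ((α * G' * G'ᴴ * αᴴ * Gᴴ) * G) := trace_mul_comm _ _
    _ = trace (α * (G' * G'ᴴ) * αᴴ * (Gᴴ * G)) := by simp only [mul_assoc]
    _ = trace ((α * U * D' * Uᴴ * αᴴ * U * D) * Uᴴ) := by rw [hinv, hg]; simp only [mul_assoc]
    _ = trace (Uᴴ * (α * U * D' * Uᴴ * αᴴ * U * D)) := trace_mul_comm _ _
    _ = trace (Uᴴ * α * U * D' * (Uᴴ * α * U)ᴴ * D) := by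
        simp only [conjTranspose_mul, conjTranspose_conjTranspose, mul_assoc]

lemma frobNormSq_unitary_conj (α : Matrix n n 𝕜) {U : Matrix n n 𝕜} (hU : Uᴴ * U = 1) :
    frobNormSq (Uᴴ * α * U) = frobNormSq α := by
  have h1 : ((1 : (Matrix n n 𝕜)ˣ) : Matrix n n 𝕜)ᴴ * ((1 : (Matrix n n 𝕜)ˣ) : Matrix n n 𝕜) =
      U * diagonal (fun i => (Real.exp ((0 : n → ℝ) i) : 𝕜)) * Uᴴ := by
    simp [mul_eq_one_comm.mp hU]
  simpa [torusNormSq_zero] using (frobNormSq_units_conj_eq_torusNormSq 1 α hU 0 h1).symm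

open scoped ComplexOrder in
lemma exists_conjTranspose_mul_self_eq_diagonal_exp (g : (Matrix n n 𝕜)ˣ) :
    ∃ U : Matrix n n 𝕜, Uᴴ * U = 1 ∧ ∃ x : n → ℝ, (g : Matrix n n 𝕜)ᴴ * (g : Matrix n n 𝕜) =
      U * diagonal (fun i => (Real.exp (x i) : 𝕜)) * Uᴴ := by
  have hP : ((g : Matrix n n 𝕜)ᴴ * (g : Matrix n n 𝕜)).PosDef :=
    .conjTranspose_mul_self _ (mulVec_injective_iff_isUnit.mpr g.isUnit)
  refine ⟨hP.1.eigenvectorUnitary, ?_, fun i => Real.log (hP.1.eigenvalues i), ?_⟩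
  · simpa [star_eq_conjTranspose] using UnitaryGroup.star_mul_self hP.1.eigenvectorUnitary
  · conv_lhs => rw [hP.1.spectral_theorem]
    simp [Real.exp_log (hP.eigenvalues_pos _), star_eq_conjTranspose, Function.comp_def]

lemma exists_units_conjTranspose_mul_self_eq {U : Matrix n n 𝕜} (hU : Uᴴ * U = 1) (x : n → ℝ) :
    ∃ g : (Matrix n n 𝕜)ˣ, (g : Matrix n n 𝕜)ᴴ * (g : Matrix n n 𝕜) =
      U * diagonal (fun i => (Real.exp (x i) : 𝕜)) * Uᴴ := by
  set d : n → 𝕜 := fun i => (Real.exp (x i / 2) : 𝕜)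
  have hd : IsUnit (diagonal d * Uᴴ) :=
    (isUnit_diagonal.mpr (Pi.isUnit_iff.mpr fun i => by simp [d, Real.exp_ne_zero])).mul
      (IsUnit.of_mul_eq_one U hU)
  refine ⟨hd.unit, ?_⟩
  simp only [IsUnit.unit_spec, conjTranspose_mul, conjTranspose_conjTranspose,
    diagonal_conjTranspose, mul_assoc]
  rw [← mul_assoc (diagonal (star d)), diagonal_mul_diagonal]
  congr 3 with i
  simp [d, ← RCLike.ofReal_mul, ← Real.exp_add]

lemma frobNormSq_le_frobNormSq_units_conj {α : Matrix n n 𝕜} (hα : momentMap α = 0)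
    (g : (Matrix n n 𝕜)ˣ) :
    frobNormSq α ≤ frobNormSq ((g : Matrix n n 𝕜) * α * (↑g⁻¹ : Matrix n n 𝕜)) := by
  obtain ⟨U, hU, x, hg⟩ := exists_conjTranspose_mul_self_eq_diagonal_exp g
  have h := frobNormSq_add_le_torusNormSq (Uᴴ * α * U) x
  rw [momentMap_unitary_conj α hU, hα, mul_zero, zero_mul, frobNormSq_unitary_conj α hU,
    ← frobNormSq_units_conj_eq_torusNormSq g α hU x hg] at h
  simpa using h

lemma momentMap_eq_zero_of_forall_frobNormSq_le {α : Matrix n n 𝕜}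
    (hmin : ∀ g : (Matrix n n 𝕜)ˣ,
      frobNormSq α ≤ frobNormSq ((g : Matrix n n 𝕜) * α * (↑g⁻¹ : Matrix n n 𝕜))) :
    momentMap α = 0 := by
  have hC := isHermitian_momentMap α
  set U : Matrix n n 𝕜 := ↑hC.eigenvectorUnitary
  have hU : Uᴴ * U = 1 := by
    simpa [star_eq_conjTranspose] using UnitaryGroup.star_mul_self hC.eigenvectorUnitary
  have hdiag : momentMap (Uᴴ * α * U) = diagonal (fun i => (hC.eigenvalues i : 𝕜)) := by
    rw [momentMap_unitary_conj α hU, ← Function.comp_def,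
      ← hC.conjStarAlgAut_star_eigenvectorUnitary]
    simp [U, star_eq_conjTranspose]
  have hlocal : IsLocalMin (fun t : ℝ => torusNormSq (Uᴴ * α * U) (t • hC.eigenvalues)) 0 := by
    refine Filter.Eventually.of_forall fun t => ?_
    obtain ⟨g, hg⟩ := exists_units_conjTranspose_mul_self_eq hU (t • hC.eigenvalues)
    simpa [torusNormSq_zero, frobNormSq_unitary_conj α hU,
      ← frobNormSq_units_conj_eq_torusNormSq g α hU _ hg] using hmin g
  have hsum := hlocal.hasDerivAt_eq_zero (hasDerivAt_torusNormSq_smul _ _)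
  simp only [hdiag, diagonal_apply_eq, RCLike.ofReal_re] at hsum
  rw [← hC.eigenvalues_eq_zero_iff]
  exact funext ((Finset.sum_mul_self_eq_zero_iff _ _).mp hsum · (Finset.mem_univ _))

theorem forall_frobNormSq_le_units_conj_iff (α : Matrix n n 𝕜) :
    (∀ g : (Matrix n n 𝕜)ˣ,
      frobNormSq α ≤ frobNormSq ((g : Matrix n n 𝕜) * α * (↑g⁻¹ : Matrix n n 𝕜))) ↔
      α * αᴴ = αᴴ * α := by
  rw [← momentMap_eq_zero_iff]
  exact ⟨momentMap_eq_zero_of_forall_frobNormSq_le, frobNormSq_le_frobNormSq_units_conj⟩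

end Matrix

/-- Lemma 5.1 in the adjoint model: a matrix `α` has minimal Frobenius norm in
its conjugation orbit `{g α g⁻¹ : g ∈ GL_m(ℂ)}` if and only if it is normal,
i.e. `α αᴴ = αᴴ α`. -/
theorem stmt_5 (m : ℕ) (α : Matrix (Fin m) (Fin m) ℂ) :
    (∀ g : (Matrix (Fin m) (Fin m) ℂ)ˣ,
        frobNorm α ≤
          frobNorm ((g : Matrix (Fin m) (Fin m) ℂ) * α *
            (↑g⁻¹ : Matrix (Fin m) (Fin m) ℂ))) ↔
      α * αᴴ = αᴴ * α := by
  rw [← forall_frobNormSq_le_units_conj_iff]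
  exact forall_congr' fun g => Real.sqrt_le_sqrt_iff (frobNormSq_nonneg _)
end

section
/- For every α ∈ M_m(ℂ) and every Hermitian matrix δ ∈ M_m(ℂ) (δᴴ = δ), the function f(t) = ‖exp(tδ) · α · exp(−tδ)‖² (Frobenius norm, matrix exponential) is differentiable at t = 0 with f′(0) = 2 · Re tr(δ · (ααᴴ − αᴴα)). Moreover, f′(0) = 0 for every Hermitian δ if and only if α is normal. -/
/-
Conjugating by `exp (tδ)` moves `α` with velocity `[δ, α]` at `t = 0`, and `‖·‖²` has derivative
`2 Re tr(B Aᴴ)` at `A` in direction `B`; cyclicity of the trace turns `Re tr([δ, α] αᴴ)` into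
`Re tr(δ [α, αᴴ])`. For the converse take `δ = [α, αᴴ]`, which is Hermitian: then
`f'(0) = 2 ‖[α, αᴴ]‖²`, so `f'(0) = 0` forces `α αᴴ = αᴴ α`.
-/

open Matrix NormedSpace

/-- The matrix exponential `exp A = ∑ₖ Aᵏ / k!`. -/
noncomputable def mexp {m : ℕ} (A : Matrix (Fin m) (Fin m) ℂ) :
    Matrix (Fin m) (Fin m) ℂ :=
  ∑' k : ℕ, ((k.factorial : ℂ)⁻¹) • (A ^ k)

theorem hasDerivAt_exp_smul_mul_mul_exp_neg_smul {𝔸 : Type*} [NormedRing 𝔸] [NormedAlgebra ℝ 𝔸]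
    [CompleteSpace 𝔸] (δ a : 𝔸) :
    HasDerivAt (fun t : ℝ => exp (t • δ) * a * exp (-(t • δ))) (δ * a - a * δ) 0 := by
  have hexp : ∀ x : 𝔸, HasDerivAt (fun t : ℝ => exp (t • x)) x 0 := fun x => by
    simpa using hasDerivAt_exp_smul_const (𝕂 := ℝ) x 0
  have h := ((hexp δ).mul_const a).mul (hexp (-δ))
  simp only [smul_neg, zero_smul, neg_zero, exp_zero, one_mul, mul_one] at h
  exact h.congr_deriv (by noncomm_ring)

theorem trace_commutator_mul {n R : Type*} [Fintype n] [CommRing R] (δ α β : Matrix n n R) :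
    ((δ * α - α * δ) * β).trace = (δ * (α * β - β * α)).trace := by
  rw [sub_mul, mul_sub, trace_sub, trace_sub, mul_assoc, mul_assoc, trace_mul_comm α, mul_assoc]

theorem re_trace_mul_conjTranspose {n : Type*} [Fintype n] (A B : Matrix n n ℂ) :
    (B * Aᴴ).trace.re = ∑ i, ∑ j, inner ℝ (A i j) (B i j) := by
  simp [trace, mul_apply, Complex.re_sum, Complex.inner]

open ComplexOrder in
theorem eq_zero_of_re_trace_mul_conjTranspose_self_eq_zero {n : Type*} [Fintype n]
    {A : Matrix n n ℂ} (h : (A * Aᴴ).trace.re = 0) : A = 0 := by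
  have hnonneg : 0 ≤ (A * Aᴴ).trace := (posSemidef_self_mul_conjTranspose A).trace_nonneg
  rw [← trace_mul_conjTranspose_self_eq_zero_iff]
  exact Complex.ext h (Complex.nonneg_iff.1 hnonneg).2.symm

theorem frobNorm_sq_eq_sum {m : ℕ} (A : Matrix (Fin m) (Fin m) ℂ) :
    frobNorm A ^ 2 = ∑ i, ∑ j, ‖A i j‖ ^ 2 :=
  Real.sq_sqrt (by positivity)

section LinftyOp

attribute [local instance] Matrix.linftyOpNormedAddCommGroup Matrix.linftyOpNormedSpace
  Matrix.linftyOpNormedRing Matrix.linftyOpNormedAlgebra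

theorem mexp_eq_exp {m : ℕ} (A : Matrix (Fin m) (Fin m) ℂ) : mexp A = exp A := by
  rw [exp_eq_tsum ℂ]
  rfl

theorem HasDerivAt.frobNorm_sq {m : ℕ} {g : ℝ → Matrix (Fin m) (Fin m) ℂ}
    {g' : Matrix (Fin m) (Fin m) ℂ} {t : ℝ} (hg : HasDerivAt g g' t) :
    HasDerivAt (fun s => frobNorm (g s) ^ 2) (2 * (g' * (g t)ᴴ).trace.re) t := by
  have hentry : ∀ i j, HasDerivAt (fun s => g s i j) (g' i j) t := fun i j =>
    (entryLinearMap ℝ ℂ i j).toContinuousLinearMap.hasFDerivAt.comp_hasDerivAt t hg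
  simp only [frobNorm_sq_eq_sum, re_trace_mul_conjTranspose, Finset.mul_sum]
  exact HasDerivAt.fun_sum fun i _ => HasDerivAt.fun_sum fun j _ => (hentry i j).norm_sq

theorem hasDerivAt_frobNorm_sq_conj_mexp {m : ℕ} (α δ : Matrix (Fin m) (Fin m) ℂ) :
    HasDerivAt (fun t : ℝ => frobNorm (mexp (t • δ) * α * mexp (-(t • δ))) ^ 2)
      (2 * (δ * (α * αᴴ - αᴴ * α)).trace.re) 0 := by
  have h := (hasDerivAt_exp_smul_mul_mul_exp_neg_smul δ α).frobNorm_sq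
  simp only [zero_smul, neg_zero, exp_zero, mul_one, one_mul, trace_commutator_mul] at h
  simp only [mexp_eq_exp]
  exact h

end LinftyOp

/-- The first-variation computation underlying Lemma 5.1 and Corollary 5.3:
for every Hermitian `δ`, the function `f(t) = ‖exp(tδ) α exp(−tδ)‖²`
(Frobenius norm) is differentiable at `t = 0` with
`f'(0) = 2 Re tr(δ (α αᴴ - αᴴ α))`; moreover `f'(0) = 0` for every Hermitian
`δ` if and only if `α` is normal. -/
theorem stmt_7 (m : ℕ) (α : Matrix (Fin m) (Fin m) ℂ) :
    (∀ δ : Matrix (Fin m) (Fin m) ℂ, δᴴ = δ →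
      HasDerivAt
        (fun t : ℝ => frobNorm (mexp (t • δ) * α * mexp (-(t • δ))) ^ 2)
        (2 * ((δ * (α * αᴴ - αᴴ * α)).trace).re) 0) ∧
    ((∀ δ : Matrix (Fin m) (Fin m) ℂ, δᴴ = δ →
        deriv (fun t : ℝ => frobNorm (mexp (t • δ) * α * mexp (-(t • δ))) ^ 2) 0 = 0) ↔
      α * αᴴ = αᴴ * α) := by
  have hf := hasDerivAt_frobNorm_sq_conj_mexp α
  refine ⟨fun δ _ => hf δ, fun h => ?_, fun h δ _ => ?_⟩
  · set M := α * αᴴ - αᴴ * α with hM_def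
    have hM : Mᴴ = M := by
      simp only [hM_def, conjTranspose_sub, conjTranspose_mul, conjTranspose_conjTranspose]
    have h0 := h M hM
    rw [(hf M).deriv] at h0
    rw [← sub_eq_zero]
    refine eq_zero_of_re_trace_mul_conjTranspose_self_eq_zero ?_
    rw [hM]
    linarith
  · rw [(hf δ).deriv, h, sub_self, mul_zero, trace_zero, Complex.zero_re, mul_zero]
end

section
/- For every α ∈ M_m(ℂ), let K be the closure in M_m(ℂ) of the conjugation orbit {g·α·g⁻¹ : g ∈ GL_m(ℂ)}. Then there exists β ∈ K with ‖β‖ ≤ ‖x‖ for all x ∈ K, and every β ∈ K attaining this minimal Frobenius norm over K is a normal matrix. -/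
/-!
The Frobenius norm is the Euclidean norm of the entries, so the closed set `K` contains a point
of least norm. If `β` is such a point, then, `K` being stable under conjugation, the function
`t ↦ ‖exp (t X) β exp (-t X)‖²` is minimal at `t = 0` for every `X`. Its derivative there is
`2 Re tr (βᴴ [X, β]) = 2 Re tr ([β, βᴴ] X)`, and taking for `X` the Hermitian matrix `[β, βᴴ]`
gives `‖[β, βᴴ]‖² = 0`.
-/

open Matrix

open scoped Norms.Frobenius

section ConjOrbit

variable {M : Type*} [Monoid M]

def conjOrbit (a : M) : Set M := {b | ∃ g : Mˣ, b = ↑g * a * ↑g⁻¹}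

lemma self_mem_conjOrbit (a : M) : a ∈ conjOrbit a := ⟨1, by simp⟩

lemma units_conj_mem_conjOrbit (u : Mˣ) {a b : M} (hb : b ∈ conjOrbit a) :
    ↑u * b * ↑u⁻¹ ∈ conjOrbit a := by
  obtain ⟨g, rfl⟩ := hb
  exact ⟨u * g, by simp [mul_assoc]⟩

lemma units_conj_mem_closure_conjOrbit [TopologicalSpace M] [ContinuousMul M] (u : Mˣ) {a b : M}
    (hb : b ∈ closure (conjOrbit a)) : ↑u * b * ↑u⁻¹ ∈ closure (conjOrbit a) :=
  map_mem_closure (f := fun x : M => ↑u * x * ↑u⁻¹) (by fun_prop) hb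
    fun _ => units_conj_mem_conjOrbit u

end ConjOrbit

lemma IsClosed.exists_forall_norm_le {E : Type*} [SeminormedAddCommGroup E] [ProperSpace E]
    {K : Set E} (hK : IsClosed K) (hne : K.Nonempty) : ∃ b ∈ K, ∀ x ∈ K, ‖b‖ ≤ ‖x‖ := by
  obtain ⟨b, hb, hdist⟩ := hK.exists_infDist_eq_dist hne 0
  refine ⟨b, hb, fun x hx => ?_⟩
  have := Metric.infDist_le_dist_of_mem (x := 0) hx
  rwa [hdist, dist_zero_left, dist_zero_left] at this

namespace Matrix

section Rectangular

variable {𝕜 : Type*} [RCLike 𝕜] {m n : Type*} [Fintype m] [Fintype n]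

-- The Frobenius norm is defined as the `L²` norm of the `L²` norms of the rows, whence `rfl`.
variable (𝕜 m n) in
noncomputable def frobeniusToLp : Matrix m n 𝕜 →ₗᵢ[ℝ] PiLp 2 (fun _ : m => EuclideanSpace 𝕜 n) where
  toFun A := WithLp.toLp 2 fun i => WithLp.toLp 2 (A i)
  map_add' _ _ := rfl
  map_smul' _ _ := rfl
  norm_map' _ := rfl

@[simp]
lemma frobeniusToLp_apply (A : Matrix m n 𝕜) (i : m) (j : n) :
    frobeniusToLp 𝕜 m n A i j = A i j :=
  rfl

lemma real_inner_frobeniusToLp (A B : Matrix m n 𝕜) :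
    inner ℝ (frobeniusToLp 𝕜 m n A) (frobeniusToLp 𝕜 m n B) = RCLike.re (trace (Aᴴ * B)) := by
  simp only [PiLp.inner_apply, real_inner_eq_re_inner 𝕜, RCLike.inner_apply', frobeniusToLp_apply,
    trace, diag, mul_apply, conjTranspose_apply, RCLike.star_def, map_sum]
  exact Finset.sum_comm

lemma frobenius_norm_sq_eq_re_trace (A : Matrix m n 𝕜) :
    ‖A‖ ^ 2 = RCLike.re (trace (Aᴴ * A)) := by
  rw [← real_inner_frobeniusToLp, real_inner_self_eq_norm_sq, LinearIsometry.norm_map]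

lemma _root_.HasDerivAt.frobenius_norm_sq {c : ℝ → Matrix m n 𝕜} {v : Matrix m n 𝕜} {t : ℝ}
    (hc : HasDerivAt c v t) :
    HasDerivAt (fun s => ‖c s‖ ^ 2) (2 * RCLike.re (trace ((c t)ᴴ * v))) t := by
  have := ((frobeniusToLp 𝕜 m n).toContinuousLinearMap.hasFDerivAt.comp_hasDerivAt t hc).norm_sq
  simpa [real_inner_frobeniusToLp] using this

lemma re_trace_conjTranspose_mul_eq_zero_of_isLocalMin {c : ℝ → Matrix m n 𝕜}
    {v : Matrix m n 𝕜} {t : ℝ} (hc : HasDerivAt c v t) (hmin : IsLocalMin (fun s => ‖c s‖) t) :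
    RCLike.re (trace ((c t)ᴴ * v)) = 0 := by
  have hmin_sq : IsLocalMin (fun s => ‖c s‖ ^ 2) t :=
    hmin.mono fun s hs => pow_le_pow_left₀ (norm_nonneg _) hs 2
  linarith [hmin_sq.hasDerivAt_eq_zero hc.frobenius_norm_sq]

end Rectangular

section Square

variable {n : Type*} [Fintype n]

lemma trace_conjTranspose_mul_commutator {R : Type*} [CommRing R] [StarRing R]
    (β X : Matrix n n R) : trace (βᴴ * (X * β - β * X)) = trace ((β * βᴴ - βᴴ * β) * X) := by
  rw [mul_sub, sub_mul, trace_sub, trace_sub, ← Matrix.mul_assoc βᴴ X β, trace_mul_cycle βᴴ X β,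
    ← Matrix.mul_assoc βᴴ β X]

variable [DecidableEq n] {𝕜 : Type*} [RCLike 𝕜]

lemma hasDerivAt_exp_smul_mul_mul_exp_smul_neg (β X : Matrix n n 𝕜) :
    HasDerivAt (fun t : ℝ => NormedSpace.exp (t • X) * β * NormedSpace.exp (t • -X))
      (X * β - β * X) 0 := by
  have hexp : ∀ Y : Matrix n n 𝕜, HasDerivAt (fun t : ℝ => NormedSpace.exp (t • Y)) Y 0 := by
    intro Y
    have := hasDerivAt_exp_smul_const (𝕂 := ℝ) Y 0
    rwa [zero_smul, NormedSpace.exp_zero, one_mul] at this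
  have := ((hexp X).mul_const β).mul (hexp (-X))
  simp only [zero_smul, NormedSpace.exp_zero, mul_one, one_mul, mul_neg, ← sub_eq_add_neg] at this
  exact this

lemma re_trace_conjTranspose_mul_commutator_eq_zero {β : Matrix n n 𝕜}
    (hβ : ∀ u : (Matrix n n 𝕜)ˣ, ‖β‖ ≤ ‖(u : Matrix n n 𝕜) * β * (↑u⁻¹ : Matrix n n 𝕜)‖)
    (X : Matrix n n 𝕜) : RCLike.re (trace (βᴴ * (X * β - β * X))) = 0 := by
  have hmin : IsLocalMin
      (fun t : ℝ => ‖NormedSpace.exp (t • X) * β * NormedSpace.exp (t • -X)‖) 0 :=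
    Filter.Eventually.of_forall fun t => by
      have := hβ (@unitOfInvertible _ _ _ (NormedSpace.invertibleExp (t • X)))
      simp only [val_unitOfInvertible, val_inv_unitOfInvertible, NormedSpace.invOf_exp] at this
      simp only [smul_neg, zero_smul, neg_zero, NormedSpace.exp_zero, one_mul, mul_one]
      exact this
  simpa using re_trace_conjTranspose_mul_eq_zero_of_isLocalMin
    (hasDerivAt_exp_smul_mul_mul_exp_smul_neg β X) hmin

lemma isStarNormal_of_forall_norm_le_units_conj {β : Matrix n n 𝕜}
    (hβ : ∀ u : (Matrix n n 𝕜)ˣ, ‖β‖ ≤ ‖(u : Matrix n n 𝕜) * β * (↑u⁻¹ : Matrix n n 𝕜)‖) :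
    IsStarNormal β := by
  set D := β * βᴴ - βᴴ * β with hD
  have hD_herm : Dᴴ = D := by simp [hD]
  have h := re_trace_conjTranspose_mul_commutator_eq_zero hβ D
  rw [trace_conjTranspose_mul_commutator, ← hD] at h
  have hD_zero : ‖D‖ ^ 2 = 0 := by rwa [frobenius_norm_sq_eq_re_trace, hD_herm]
  rw [sq_eq_zero_iff, norm_eq_zero, hD, sub_eq_zero] at hD_zero
  exact ⟨hD_zero.symm⟩

end Square

end Matrix

lemma frobNorm_eq_norm {m : ℕ} (A : Matrix (Fin m) (Fin m) ℂ) : frobNorm A = ‖A‖ := by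
  rw [frobNorm, frobenius_norm_def, Real.sqrt_eq_rpow]
  simp only [Real.rpow_two]

/-- The Kempf–Ness fact in the adjoint model: the closure `K` of the
conjugation orbit of any `α ∈ M_m(ℂ)` contains a point of smallest Frobenius
norm, and every point of `K` of smallest norm is a normal matrix. -/
theorem stmt_9 (m : ℕ) (α : Matrix (Fin m) (Fin m) ℂ)
    (K : Set (Matrix (Fin m) (Fin m) ℂ))
    (hK : K = closure {β : Matrix (Fin m) (Fin m) ℂ |
      ∃ g : (Matrix (Fin m) (Fin m) ℂ)ˣ,
        β = (g : Matrix (Fin m) (Fin m) ℂ) * α *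
          (↑g⁻¹ : Matrix (Fin m) (Fin m) ℂ)}) :
    (∃ β ∈ K, ∀ x ∈ K, frobNorm β ≤ frobNorm x) ∧
      ∀ β ∈ K, (∀ x ∈ K, frobNorm β ≤ frobNorm x) → β * βᴴ = βᴴ * β := by
  change K = closure (conjOrbit α) at hK
  subst hK
  simp only [frobNorm_eq_norm]
  refine ⟨isClosed_closure.exists_forall_norm_le ⟨α, subset_closure (self_mem_conjOrbit α)⟩,
    fun β hβ hmin => ?_⟩
  have hnormal : IsStarNormal β := isStarNormal_of_forall_norm_le_units_conj fun u =>
    hmin _ (units_conj_mem_closure_conjOrbit u hβ)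
  exact hnormal.star_comm_self.eq.symm
end

section
/- Let ι be a finite type, w : ι → ℤ and v : ι → ℂ, and suppose there exists i ∈ ι with v(i) ≠ 0 and w(i) ≠ 0. Then the orbit { (t^{w(i)} · v(i))_{i ∈ ι} : t ∈ ℂ, t ≠ 0 } is a closed subset of the product space ι → ℂ if and only if there exist indices i, j with v(i) ≠ 0, v(j) ≠ 0, w(i) > 0 and w(j) < 0. -/
/-!
If every weight on the support of `v` is `≥ 0` and one of them is positive, the orbit map
`t ↦ (t ^ w i * v i)ᵢ` extends continuously to `t = 0`, and its value there is a limit point of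
the orbit outside it; replacing `t` by `t⁻¹` handles weights `≤ 0`. If instead there are weights
`w i > 0 > w j` on the support, convergence of the `i`- and `j`-coordinates along a sequence in the
orbit keeps both `t` and `t⁻¹` bounded, so a subsequence of `t` converges to some `T ≠ 0`, and the
limit of the sequence is the orbit point of `T`.
-/

open Filter Topology Set Bornology

section WeightOrbit

variable {ι 𝕜 : Type*} [NontriviallyNormedField 𝕜]

lemma isBounded_of_isBounded_image_zpow {s : Set 𝕜} {m : ℤ} (hm : 0 < m)
    (h : IsBounded ((· ^ m) '' s)) : IsBounded s := by
  lift m to ℕ using hm.le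
  obtain ⟨C, hC⟩ := isBounded_iff_forall_norm_le.1 h
  refine isBounded_iff_forall_norm_le.2 ⟨max 1 C, fun x hx => ?_⟩
  rcases le_or_gt ‖x‖ 1 with hx1 | hx1
  · exact hx1.trans (le_max_left _ _)
  · calc ‖x‖ ≤ ‖x‖ ^ m := le_self_pow₀ hx1.le (by omega)
      _ = ‖x ^ (m : ℤ)‖ := by rw [zpow_natCast, norm_pow]
      _ ≤ C := hC _ (mem_image_of_mem _ hx)
      _ ≤ max 1 C := le_max_right _ _

lemma isBounded_range_of_tendsto_zpow {u : ℕ → 𝕜} {m : ℤ} (hm : 0 < m) {a : 𝕜}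
    (h : Tendsto (fun n => u n ^ m) atTop (𝓝 a)) : IsBounded (range u) :=
  isBounded_of_isBounded_image_zpow hm <| by
    rw [← range_comp]
    exact Metric.isBounded_range_of_tendsto _ h

def weightOrbit (w : ι → ℤ) (v : ι → 𝕜) : Set (ι → 𝕜) :=
  {x | ∃ t : 𝕜, t ≠ 0 ∧ x = fun i => t ^ (w i) * v i}

variable {w : ι → ℤ} {v : ι → 𝕜}

lemma weightOrbit_neg : weightOrbit (-w) v = weightOrbit w v := by
  ext x
  constructor <;> rintro ⟨t, ht, rfl⟩ <;> refine ⟨t⁻¹, inv_ne_zero ht, ?_⟩ <;>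
    ext i <;> simp [inv_zpow']

lemma continuousAt_zero_of_weight_nonneg (hw : ∀ i, v i ≠ 0 → 0 ≤ w i) :
    ContinuousAt (fun (t : 𝕜) i => t ^ (w i) * v i) 0 :=
  continuousAt_pi.2 fun i => by
    by_cases hvi : v i = 0
    · simpa [hvi] using continuousAt_const
    · exact (continuousAt_zpow₀ _ _ (Or.inr (hw i hvi))).mul continuousAt_const

lemma not_isClosed_weightOrbit (hw : ∀ i, v i ≠ 0 → 0 ≤ w i) {i₀ : ι} (hv₀ : v i₀ ≠ 0)
    (hw₀ : 0 < w i₀) : ¬ IsClosed (weightOrbit w v) := by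
  intro hclosed
  have hlim : (fun i => (0 : 𝕜) ^ (w i) * v i) ∈ closure (weightOrbit w v) :=
    mem_closure_of_tendsto
      ((continuousAt_zero_of_weight_nonneg hw).tendsto.mono_left nhdsWithin_le_nhds)
      (eventually_nhdsWithin_of_forall (s := {0}ᶜ) fun t ht => ⟨t, ht, rfl⟩)
  obtain ⟨t, ht, heq⟩ := hclosed.closure_subset hlim
  exact mul_ne_zero (zpow_ne_zero _ ht) hv₀ <| by
    simpa [zero_zpow _ hw₀.ne'] using (congr_fun heq i₀).symm

lemma isClosed_weightOrbit [Countable ι] [ProperSpace 𝕜] {i j : ι} (hvi : v i ≠ 0)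
    (hvj : v j ≠ 0) (hwi : 0 < w i) (hwj : w j < 0) : IsClosed (weightOrbit w v) := by
  refine IsSeqClosed.isClosed fun u x hu hux => ?_
  choose t ht hut using hu
  have hcoord k : Tendsto (fun n => t n ^ (w k) * v k) atTop (𝓝 (x k)) := by
    simpa only [hut] using tendsto_pi_nhds.1 hux k
  have hpow k (hvk : v k ≠ 0) : Tendsto (fun n => t n ^ (w k)) atTop (𝓝 (x k / v k)) := by
    simpa only [mul_div_cancel_right₀ _ hvk] using (hcoord k).div_const (v k)
  have hbdd : IsBounded (range t) := isBounded_range_of_tendsto_zpow hwi (hpow i hvi)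
  have hbdd_inv : IsBounded (range fun n => (t n)⁻¹) :=
    isBounded_range_of_tendsto_zpow (neg_pos.2 hwj) <| by
      simpa only [inv_zpow', neg_neg] using hpow j hvj
  obtain ⟨⟨T, S⟩, -, φ, hφ, hlim⟩ := tendsto_subseq_of_bounded (hbdd.prod hbdd_inv)
    (x := fun n => (t n, (t n)⁻¹)) fun n => ⟨mem_range_self n, mem_range_self n⟩
  have hTS : T * S = 1 := by
    refine tendsto_nhds_unique ((hlim.fst_nhds).mul hlim.snd_nhds) ?_
    simp [mul_inv_cancel₀ (ht _)]
  have hT : T ≠ 0 := left_ne_zero_of_mul_eq_one hTS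
  refine ⟨T, hT, funext fun k => tendsto_nhds_unique ((hcoord k).comp hφ.tendsto_atTop) ?_⟩
  exact (hlim.fst_nhds.zpow₀ _ (Or.inl hT)).mul_const _

end WeightOrbit

/-- Hilbert–Mumford criterion for a one-parameter subgroup acting with integer
weights `w` on `ι → ℂ`: if some non-zero component of `v` has non-zero weight,
then the orbit `{(t^{w i} * v i)ᵢ : t ∈ ℂ*}` is closed if and only if there
are non-zero components of `v` whose weights differ in sign. -/
theorem stmt_11 (ι : Type) [Fintype ι] (w : ι → ℤ) (v : ι → ℂ)
    (hv : ∃ i, v i ≠ 0 ∧ w i ≠ 0) :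
    IsClosed {x : ι → ℂ | ∃ t : ℂ, t ≠ 0 ∧ x = fun i => t ^ (w i) * v i} ↔
      ∃ i j, v i ≠ 0 ∧ v j ≠ 0 ∧ 0 < w i ∧ w j < 0 := by
  change IsClosed (weightOrbit w v) ↔ _
  refine ⟨fun hclosed => ?_,
    fun ⟨i, j, hvi, hvj, hwi, hwj⟩ => isClosed_weightOrbit hvi hvj hwi hwj⟩
  by_contra! hsign
  obtain ⟨i₀, hv₀, hw₀⟩ := hv
  rcases hw₀.lt_or_gt with hneg | hpos
  · rw [← weightOrbit_neg] at hclosed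
    have hw i (hvi : v i ≠ 0) : 0 ≤ -w i :=
      neg_nonneg.2 (not_lt.1 fun hpos => (hsign i i₀ hvi hv₀ hpos).not_gt hneg)
    exact not_isClosed_weightOrbit hw hv₀ (neg_pos.2 hneg) hclosed
  · exact not_isClosed_weightOrbit (fun i hvi => hsign i₀ i hv₀ hvi hpos) hv₀ hpos hclosed
end

section
/- Let ι be a finite type, w : ι → ℤ and v : ι → ℂ. The map φ : ℂˣ → (ι → ℂ) defined by φ(t) = (t^{w(i)} · v(i))_{i ∈ ι} is proper (i.e. φ tends to the cocompact filter of ι → ℂ along the cocompact filter of ℂˣ; equivalently, preimages of compact sets are compact) if and only if there exist indices i, j with v(i) ≠ 0, v(j) ≠ 0, w(i) > 0 and w(j) < 0. -/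
/-!
Pushing the cocompact filter of `ℂˣ` forward to `ℂ` gives `𝓝[≠] 0 ⊔ cobounded ℂ`, so the orbit
map is proper iff it escapes to infinity both as `t → ∞` and as `t → 0`. As `t → ∞` a coordinate
with `v i ≠ 0` and `w i > 0` blows up; if there is none, every coordinate stays bounded by `‖v‖`
for `‖t‖ ≥ 1`. The substitution `t ↦ t⁻¹` swaps the two ends and negates the weights.
-/

open Filter Topology Bornology

section Units

variable {𝕜 : Type*} [NormedField 𝕜] [ProperSpace 𝕜]

lemma Units.isCompact_preimage_val_annulus {ε R : ℝ} (hε : 0 < ε) :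
    IsCompact ((Units.val : 𝕜ˣ → 𝕜) ⁻¹' {z | ε ≤ ‖z‖ ∧ ‖z‖ ≤ R}) := by
  refine Units.isEmbedding_val₀.isInducing.isCompact_preimage' ?_ ?_
  · refine (isCompact_closedBall (0 : 𝕜) R).of_isClosed_subset
      ((isClosed_le continuous_const continuous_norm).inter
        (isClosed_le continuous_norm continuous_const)) fun z hz => ?_
    simpa using hz.2
  · rintro z ⟨hz, -⟩
    exact ⟨Units.mk0 z (norm_pos_iff.mp (hε.trans_le hz)), rfl⟩

lemma Units.map_val_cocompact :
    Filter.map (Units.val : 𝕜ˣ → 𝕜) (cocompact 𝕜ˣ) = 𝓝[≠] 0 ⊔ cobounded 𝕜 := by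
  apply le_antisymm
  · rintro s ⟨hs0, hsInf⟩
    obtain ⟨ε, hε, hεs⟩ := Metric.mem_nhdsWithin_iff.mp hs0
    obtain ⟨R, -, hR⟩ := hasBasis_cobounded_norm.mem_iff.mp hsInf
    refine mem_cocompact.mpr ⟨_, Units.isCompact_preimage_val_annulus (R := R) hε, fun t ht => ?_⟩
    simp only [Set.mem_compl_iff, Set.mem_preimage, Set.mem_ofPred_eq, not_and_or, not_le] at ht
    rcases ht with ht | ht
    · exact hεs ⟨mem_ball_zero_iff.mpr ht, t.ne_zero⟩
    · exact hR ht.le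
  · refine (hasBasis_cocompact.map _).ge_iff.mpr fun K hK => ?_
    have hK' : IsCompact (Units.val '' K) := hK.image Units.continuous_val
    have hK0 : (0 : 𝕜) ∉ Units.val '' K := fun ⟨t, _, ht⟩ => t.ne_zero ht
    have hmem : (Units.val '' K)ᶜ ∩ {0}ᶜ ∈ 𝓝[≠] 0 ⊔ cobounded 𝕜 :=
      inter_mem ⟨nhdsWithin_le_nhds (hK'.isClosed.compl_mem_nhds hK0), hK'.isBounded⟩
        ⟨self_mem_nhdsWithin, isBounded_singleton⟩
    refine mem_of_superset hmem ?_
    rintro z ⟨hzK, hz0⟩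
    exact ⟨Units.mk0 z hz0, fun ht => hzK ⟨_, ht, rfl⟩, rfl⟩

end Units

/-- `χ(t) • v` for the one-parameter subgroup `χ` with weights `w`, defined on all of `𝕜`. -/
def orbitMap {𝕜 ι : Type*} [DivisionRing 𝕜] (w : ι → ℤ) (v : ι → 𝕜) (z : 𝕜) : ι → 𝕜 :=
  fun i => z ^ w i * v i

lemma norm_orbitMap_le_of_one_le_norm {𝕜 ι : Type*} [NormedDivisionRing 𝕜] [Fintype ι]
    (w : ι → ℤ) (v : ι → 𝕜) {z : 𝕜} (hz : 1 ≤ ‖z‖) (hw : ∀ i, v i ≠ 0 → w i ≤ 0) :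
    ‖orbitMap w v z‖ ≤ ‖v‖ := by
  refine (pi_norm_le_iff_of_nonneg (norm_nonneg v)).mpr fun i => ?_
  by_cases hvi : v i = 0
  · simp [orbitMap, hvi]
  rw [orbitMap, norm_mul, norm_zpow]
  exact (mul_le_of_le_one_left (norm_nonneg _) (zpow_le_one_of_nonpos₀ hz (hw i hvi))).trans
    (norm_le_pi_norm v i)

lemma tendsto_orbitMap_cobounded_iff {𝕜 ι : Type*} [NontriviallyNormedField 𝕜] [Fintype ι]
    (w : ι → ℤ) (v : ι → 𝕜) :
    Tendsto (orbitMap w v) (cobounded 𝕜) (cobounded (ι → 𝕜)) ↔ ∃ i, v i ≠ 0 ∧ 0 < w i := by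
  rw [← tendsto_norm_atTop_iff_cobounded]
  constructor
  · intro h
    by_contra! hw
    obtain ⟨z, hz, hzv⟩ :=
      ((eventually_cobounded_le_norm 1).and (h.eventually_gt_atTop ‖v‖)).exists
    exact (norm_orbitMap_le_of_one_le_norm w v hz hw).not_gt hzv
  · rintro ⟨i, hvi, hwi⟩
    have hi : Tendsto (fun z : 𝕜 => ‖z‖ ^ w i * ‖v i‖) (cobounded 𝕜) atTop :=
      ((tendsto_zpow_atTop_atTop hwi).comp tendsto_norm_cobounded_atTop).atTop_mul_const
        (norm_pos_iff.mpr hvi)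
    refine tendsto_atTop_mono (fun z => ?_) hi
    simpa [orbitMap, norm_mul, norm_zpow] using norm_le_pi_norm (orbitMap w v z) i

lemma tendsto_orbitMap_nhdsNE_zero_iff {𝕜 ι : Type*} [NontriviallyNormedField 𝕜] [Fintype ι]
    (w : ι → ℤ) (v : ι → 𝕜) :
    Tendsto (orbitMap w v) (𝓝[≠] 0) (cobounded (ι → 𝕜)) ↔ ∃ i, v i ≠ 0 ∧ w i < 0 := by
  have hinv : orbitMap w v ∘ Inv.inv = orbitMap (-w) v := by
    ext z i
    simp [orbitMap, inv_zpow']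
  rw [← inv_cobounded₀, ← Filter.map_inv, tendsto_map'_iff, hinv,
    tendsto_orbitMap_cobounded_iff]
  simp only [Pi.neg_apply, Left.neg_pos_iff]

/-- Properness criterion for a one-parameter subgroup acting with integer
weights `w` on `ι → ℂ`: the map `ℂˣ → (ι → ℂ)`, `t ↦ (t^{w i} * v i)ᵢ`, is
proper (tends to the cocompact filter along the cocompact filter) if and only
if there are non-zero components of `v` whose weights differ in sign. -/
theorem stmt_12 (ι : Type) [Fintype ι] (w : ι → ℤ) (v : ι → ℂ) :
    Filter.Tendsto
        (fun t : ℂˣ => (fun i => (t : ℂ) ^ (w i) * v i : ι → ℂ))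
        (Filter.cocompact ℂˣ) (Filter.cocompact (ι → ℂ)) ↔
      ∃ i j, v i ≠ 0 ∧ v j ≠ 0 ∧ 0 < w i ∧ w j < 0 := by
  change Tendsto (orbitMap w v ∘ Units.val) _ _ ↔ _
  rw [← tendsto_map'_iff, Units.map_val_cocompact, ← Metric.cobounded_eq_cocompact, tendsto_sup,
    tendsto_orbitMap_nhdsNE_zero_iff, tendsto_orbitMap_cobounded_iff]
  constructor
  · rintro ⟨⟨j, hvj, hwj⟩, i, hvi, hwi⟩
    exact ⟨i, j, hvi, hvj, hwi, hwj⟩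
  · rintro ⟨i, j, hvi, hvj, hwi, hwj⟩
    exact ⟨⟨j, hvj, hwj⟩, i, hvi, hwi⟩
end

section
/- Let ι be a finite nonempty type, w : ι → ℤ and v : ι → ℂ with v not identically zero. Equip ι → ℂ with the supremum norm. Then, as the real parameter t tends to 0 from the right, the quotient log‖(t^{w(i)} · v(i))_{i ∈ ι}‖ / log t converges to the minimum of w(i) over those i with v(i) ≠ 0. -/
/-!
Let `m` be the least weight on the support of `v`. For `0 < t ≤ 1` the coordinate of weight
`m` bounds the sup norm from below by `‖v i₀‖ t^m`, and `t^{w i} ≤ t^m` for every other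
coordinate in the support bounds it from above by `‖v‖ t^m`. So `log ‖t · v‖ = m log t + O(1)`,
and dividing by `log t → -∞` leaves `m`.
-/

open Filter Topology Real

theorem tendsto_log_div_log_nhdsGT_zero_of_le_of_le {f : ℝ → ℝ} {m c C : ℝ}
    (hc : 0 < c) (hC : 0 < C)
    (hlow : ∀ᶠ t in 𝓝[>] 0, c * t ^ m ≤ f t) (hup : ∀ᶠ t in 𝓝[>] 0, f t ≤ C * t ^ m) :
    Tendsto (fun t => log (f t) / log t) (𝓝[>] 0) (𝓝 m) := by
  have hinv : Tendsto (fun t => (log t)⁻¹) (𝓝[>] 0) (𝓝 0) :=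
    tendsto_log_nhdsGT_zero.inv_tendsto_atBot
  have hlim (a : ℝ) : Tendsto (fun t => m + a / log t) (𝓝[>] 0) (𝓝 m) := by
    simpa [div_eq_mul_inv] using (tendsto_const_nhds (x := a)).mul hinv |>.const_add m
  have hlog_mul_rpow {a t : ℝ} (ha : 0 < a) (ht : 0 < t) :
      log (a * t ^ m) = log a + m * log t := by
    rw [log_mul ha.ne' (rpow_pos_of_pos ht m).ne', log_rpow ht]
  have hbounds : ∀ᶠ t in 𝓝[>] 0,
      m + log C / log t ≤ log (f t) / log t ∧ log (f t) / log t ≤ m + log c / log t := by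
    filter_upwards [hlow, hup, Ioo_mem_nhdsGT one_pos] with t hlow hup ⟨ht0, ht1⟩
    have hlogt : log t < 0 := log_neg ht0 ht1
    have hct : 0 < c * t ^ m := mul_pos hc (rpow_pos_of_pos ht0 m)
    constructor
    · rw [le_div_iff_of_neg hlogt, add_mul, div_mul_cancel₀ _ hlogt.ne, add_comm,
        ← hlog_mul_rpow hC ht0]
      exact log_le_log (hct.trans_le hlow) hup
    · rw [div_le_iff_of_neg hlogt, add_mul, div_mul_cancel₀ _ hlogt.ne, add_comm,
        ← hlog_mul_rpow hc ht0]
      exact log_le_log hct hlow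
  exact tendsto_of_tendsto_of_tendsto_of_le_of_le' (hlim (log C)) (hlim (log c))
    (hbounds.mono fun _ h => h.1) (hbounds.mono fun _ h => h.2)

theorem norm_ofReal_zpow_mul {t : ℝ} (ht : 0 ≤ t) (k : ℤ) (z : ℂ) :
    ‖(t : ℂ) ^ k * z‖ = t ^ k * ‖z‖ := by
  rw [norm_mul, norm_zpow, Complex.norm_real, Real.norm_of_nonneg ht]

section WeightedNorm

variable {ι : Type} [Fintype ι] (w : ι → ℤ) (v : ι → ℂ) {t : ℝ}

theorem zpow_mul_norm_le_norm_zpow_mul (ht : 0 ≤ t) (i : ι) :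
    t ^ w i * ‖v i‖ ≤ ‖(fun i => (t : ℂ) ^ w i * v i : ι → ℂ)‖ :=
  norm_ofReal_zpow_mul ht (w i) (v i) ▸ norm_le_pi_norm (fun i => (t : ℂ) ^ w i * v i) i

theorem norm_zpow_mul_le_of_le_weight {m : ℤ} (hm : ∀ i, v i ≠ 0 → m ≤ w i)
    (ht0 : 0 < t) (ht1 : t ≤ 1) :
    ‖(fun i => (t : ℂ) ^ w i * v i : ι → ℂ)‖ ≤ ‖v‖ * t ^ m := by
  refine pi_norm_le_iff_of_nonneg (by positivity) |>.mpr fun i => ?_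
  rw [norm_ofReal_zpow_mul ht0.le, mul_comm]
  by_cases hvi : v i = 0
  · rw [hvi, norm_zero, zero_mul]
    positivity
  · exact mul_le_mul (norm_le_pi_norm v i) (zpow_le_zpow_right_of_le_one₀ ht0 ht1 (hm i hvi))
      (by positivity) (norm_nonneg v)

end WeightedNorm

theorem stmt_13_general (ι : Type) [Fintype ι] (w : ι → ℤ) (v : ι → ℂ)
    (hne : (Finset.univ.filter fun i => v i ≠ 0).Nonempty) :
    Filter.Tendsto
      (fun t : ℝ =>
        Real.log ‖(fun i => (t : ℂ) ^ (w i) * v i : ι → ℂ)‖ / Real.log t)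
      (nhdsWithin 0 (Set.Ioi 0))
      (nhds ((((Finset.univ.filter fun i => v i ≠ 0).image w).min'
        (hne.image w) : ℤ) : ℝ)) := by
  set m := ((Finset.univ.filter fun i => v i ≠ 0).image w).min' (hne.image w)
  obtain ⟨i₀, hi₀, hwi₀ : w i₀ = m⟩ := Finset.mem_image.mp (Finset.min'_mem _ (hne.image w))
  have hvi₀ : v i₀ ≠ 0 := (Finset.mem_filter.mp hi₀).2
  have hm (i : ι) (hvi : v i ≠ 0) : m ≤ w i :=
    Finset.min'_le _ _ (Finset.mem_image_of_mem w (Finset.mem_filter.mpr ⟨Finset.mem_univ i, hvi⟩))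
  refine tendsto_log_div_log_nhdsGT_zero_of_le_of_le (norm_pos_iff.mpr hvi₀)
    (norm_pos_iff.mpr fun hv => hvi₀ (congrFun hv i₀)) ?_ ?_
  · filter_upwards [self_mem_nhdsWithin] with t (ht : 0 < t)
    rw [rpow_intCast, mul_comm, ← hwi₀]
    exact zpow_mul_norm_le_norm_zpow_mul w v ht.le i₀
  · filter_upwards [Ioc_mem_nhdsGT one_pos] with t ⟨ht0, ht1⟩
    rw [rpow_intCast]
    exact norm_zpow_mul_le_of_le_weight w v hm ht0 ht1

/-- The numerical criterion of §5: with the sup norm on `ι → ℂ`, as `t → 0⁺`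
the quotient `log‖(t^{w i} * v i)ᵢ‖ / log t` converges to the minimum of the
weights `w i` over the indices `i` with `v i ≠ 0`. -/
theorem stmt_13 (ι : Type) [Fintype ι] [Nonempty ι] (w : ι → ℤ) (v : ι → ℂ)
    (hne : (Finset.univ.filter fun i => v i ≠ 0).Nonempty) :
    Filter.Tendsto
      (fun t : ℝ =>
        Real.log ‖(fun i => (t : ℂ) ^ (w i) * v i : ι → ℂ)‖ / Real.log t)
      (nhdsWithin 0 (Set.Ioi 0))
      (nhds ((((Finset.univ.filter fun i => v i ≠ 0).image w).min'
        (hne.image w) : ℤ) : ℝ)) :=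
  stmt_13_general ι w v hne
end

section
/- Let m ≥ 1, let u_1 ≥ u_2 ≥ … ≥ u_m be real numbers, and let b_{ij} (1 ≤ i, j ≤ m) be nonnegative real numbers with b_{ij} = b_{ji}. Then ∑_{i=1}^m ∑_{j=i+1}^m (u_i − u_j) · b_{ij} ≤ 2^{m−1} · ∑_{i=1}^m |∑_{j=1}^m (u_i − u_j) · b_{ij}|. -/
/-!
Put `s i j = (u i - u j) * b i j`: it is skew-symmetric and nonnegative above the diagonal.
For a fixed row `i`, the upper part of that row is at most the sum of the entries of the block
`rows ≤ i, columns > i`. Adding the block `rows ≤ i, columns ≤ i`, which sums to zero by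
skew-symmetry, turns this into the sum of the full row sums of rows `≤ i`, hence it is at most
`∑ |row sums|`. Summing over `i` gives the bound with the factor `m ≤ 2 ^ (m - 1)`.
-/

open Finset

section SkewSymmetric

variable {ι α : Type*} [AddCommGroup α] [LinearOrder α] [IsOrderedAddMonoid α]
  {s : ι → ι → α}

theorem Finset.sum_sum_eq_zero_of_skew (hs : ∀ i j, s j i = -s i j) (t : Finset ι) :
    ∑ i ∈ t, ∑ j ∈ t, s i j = 0 := by
  have h : ∑ i ∈ t, ∑ j ∈ t, s i j = -∑ i ∈ t, ∑ j ∈ t, s i j :=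
    calc ∑ i ∈ t, ∑ j ∈ t, s i j
        = ∑ j ∈ t, ∑ i ∈ t, s i j := sum_comm
      _ = ∑ j ∈ t, ∑ i ∈ t, -s j i :=
          sum_congr rfl fun j _ => sum_congr rfl fun i _ => hs j i
      _ = -∑ j ∈ t, ∑ i ∈ t, s j i := by simp only [sum_neg_distrib]
  exact self_eq_neg.mp h

variable [Fintype ι] [LinearOrder ι] [LocallyFiniteOrderBot ι] [LocallyFiniteOrderTop ι]

theorem sum_Iic_sum_Ioi_eq_sum_Iic_sum_of_skew (hs : ∀ i j, s j i = -s i j) (i : ι) :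
    ∑ k ∈ Iic i, ∑ j ∈ Ioi i, s k j = ∑ k ∈ Iic i, ∑ j, s k j := by
  have hcompl : (Iic i)ᶜ = Ioi i := by
    ext x
    simp
  simp only [← hcompl, ← sum_add_sum_compl (Iic i) (s _), sum_add_distrib,
    sum_sum_eq_zero_of_skew hs, zero_add]

theorem sum_Ioi_le_sum_abs_sum_of_skew (hs : ∀ i j, s j i = -s i j)
    (hnonneg : ∀ i j, i < j → 0 ≤ s i j) (i : ι) :
    ∑ j ∈ Ioi i, s i j ≤ ∑ k, |∑ j, s k j| :=
  calc ∑ j ∈ Ioi i, s i j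
      ≤ ∑ k ∈ Iic i, ∑ j ∈ Ioi i, s k j :=
        single_le_sum (f := fun k => ∑ j ∈ Ioi i, s k j)
          (fun _ hk => sum_nonneg fun j hj =>
            hnonneg _ j ((mem_Iic.mp hk).trans_lt (mem_Ioi.mp hj)))
          (mem_Iic.mpr le_rfl)
    _ = ∑ k ∈ Iic i, ∑ j, s k j := sum_Iic_sum_Ioi_eq_sum_Iic_sum_of_skew hs i
    _ ≤ ∑ k ∈ Iic i, |∑ j, s k j| := sum_le_sum fun _ _ => le_abs_self _
    _ ≤ ∑ k, |∑ j, s k j| :=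
        sum_le_sum_of_subset_of_nonneg (subset_univ _) fun _ _ _ => abs_nonneg _

theorem sum_sum_Ioi_le_card_nsmul_sum_abs_sum_of_skew (hs : ∀ i j, s j i = -s i j)
    (hnonneg : ∀ i j, i < j → 0 ≤ s i j) :
    ∑ i, ∑ j ∈ Ioi i, s i j ≤ Fintype.card ι • ∑ k, |∑ j, s k j| := by
  simpa using sum_le_sum fun i (_ : i ∈ univ) =>
    sum_Ioi_le_sum_abs_sum_of_skew hs hnonneg i

end SkewSymmetric

theorem stmt_15_general (m : ℕ) (u : Fin m → ℝ)
    (hu : ∀ i j : Fin m, i ≤ j → u j ≤ u i)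
    (b : Fin m → Fin m → ℝ) (hb : ∀ i j, 0 ≤ b i j)
    (hsymm : ∀ i j, b i j = b j i) :
    ∑ i : Fin m, ∑ j ∈ Finset.Ioi i, (u i - u j) * b i j ≤
      (2 : ℝ) ^ (m - 1) * ∑ i : Fin m, |∑ j : Fin m, (u i - u j) * b i j| := by
  have hskew : ∀ i j, (u j - u i) * b j i = -((u i - u j) * b i j) := fun i j => by
    rw [hsymm j i]
    ring
  have hbound := sum_sum_Ioi_le_card_nsmul_sum_abs_sum_of_skew hskew
    fun i j hij => mul_nonneg (sub_nonneg.mpr (hu i j hij.le)) (hb i j)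
  have hcard : (m : ℝ) ≤ 2 ^ (m - 1) := by
    exact_mod_cast (show m ≤ 2 ^ (m - 1) by have := (m - 1).lt_two_pow_self; omega)
  rw [Fintype.card_fin, nsmul_eq_mul] at hbound
  exact hbound.trans (mul_le_mul_of_nonneg_right hcard (sum_nonneg fun _ _ => abs_nonneg _))

/-- The bridging step in the proof of Lemma 8.4: if `u 1 ≥ u 2 ≥ … ≥ u m` are
reals and `b i j = b j i ≥ 0`, then
`∑_i ∑_{j>i} (u i - u j) * b i j ≤ 2^(m-1) ∑_i |∑_j (u i - u j) * b i j|`. -/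
theorem stmt_15 (m : ℕ) (hm : 1 ≤ m) (u : Fin m → ℝ)
    (hu : ∀ i j : Fin m, i ≤ j → u j ≤ u i)
    (b : Fin m → Fin m → ℝ) (hb : ∀ i j, 0 ≤ b i j)
    (hsymm : ∀ i j, b i j = b j i) :
    ∑ i : Fin m, ∑ j ∈ Finset.Ioi i, (u i - u j) * b i j ≤
      (2 : ℝ) ^ (m - 1) * ∑ i : Fin m, |∑ j : Fin m, (u i - u j) * b i j| :=
  stmt_15_general m u hu b hb hsymm
end
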